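/- arXiv:1811.06777 — 6 statements merged into one kernel-verified Lean document; each statement's English description precedes it below -/
import Mathlib

section
/- Let N be a binary tree-child network on X, let A ⊆ X, and let x be a highest tree node of N with leaf-descendant set equal to A. If y ≠ x is another tree node with leaf-descendant set A, then one child of x is a reticulation r such that y is below x and y is above r. Consequently, x is the unique highest tree node with leaf-descendant set A. -/
open scoped Classical
noncomputable section

/-- A (rooted binary phylogenetic) network datum: a finite directed graph on `ℕ`
with an optional leaf-labelling by `α`. -/
structure Net (α : Type) where
  verts : Finset ℕ
  edges : Finset (ℕ × ℕ)
  lab : ℕ → Option α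

namespace Net

variable {α β : Type}

def Edge (N : Net α) (u v : ℕ) : Prop := (u, v) ∈ N.edges

def indeg (N : Net α) (v : ℕ) : ℕ := (N.edges.filter fun e => e.2 = v).card
def outdeg (N : Net α) (v : ℕ) : ℕ := (N.edges.filter fun e => e.1 = v).card

/-- Reachability by directed paths. -/
def Reaches (N : Net α) : ℕ → ℕ → Prop := Relation.ReflTransGen N.Edge

def IsRoot (N : Net α) (v : ℕ) : Prop :=
  v ∈ N.verts ∧ N.indeg v = 0 ∧ N.outdeg v = 1
def IsLeaf (N : Net α) (v : ℕ) : Prop :=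
  v ∈ N.verts ∧ N.indeg v = 1 ∧ N.outdeg v = 0
def IsTreeNode (N : Net α) (v : ℕ) : Prop :=
  v ∈ N.verts ∧ N.indeg v = 1 ∧ N.outdeg v = 2
def IsRetic (N : Net α) (v : ℕ) : Prop :=
  v ∈ N.verts ∧ N.indeg v = 2 ∧ N.outdeg v = 1

/-- `N` is a rooted binary phylogenetic network on leaf set `α`. -/
def IsNetwork (N : Net α) : Prop :=
  (∀ e ∈ N.edges, e.1 ∈ N.verts ∧ e.2 ∈ N.verts) ∧
  (∀ u v, N.Edge u v → ¬ N.Reaches v u) ∧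
  (∃! r, N.IsRoot r) ∧
  (∀ v ∈ N.verts, N.IsRoot v ∨ N.IsLeaf v ∨ N.IsTreeNode v ∨ N.IsRetic v) ∧
  (∀ v, (∃ x, N.lab v = some x) ↔ N.IsLeaf v) ∧
  (∀ x : α, ∃! v, N.lab v = some x)

/-- Tree-child: every non-leaf node has a child that is a tree node or a leaf. -/
def TreeChild (N : Net α) : Prop :=
  N.IsNetwork ∧
  ∀ v ∈ N.verts, ¬ N.IsLeaf v → ∃ c, N.Edge v c ∧ (N.IsTreeNode c ∨ N.IsLeaf c)

def IsReticEdge (N : Net α) (e : ℕ × ℕ) : Prop := e ∈ N.edges ∧ N.IsRetic e.2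

def deleteNode (N : Net α) (v : ℕ) : Net α :=
  ⟨N.verts.erase v, N.edges.filter fun e => e.1 ≠ v ∧ e.2 ≠ v, N.lab⟩

def deleteEdge (N : Net α) (e : ℕ × ℕ) : Net α := ⟨N.verts, N.edges.erase e, N.lab⟩

def deleteEdges (N : Net α) (E : Finset (ℕ × ℕ)) : Net α := ⟨N.verts, N.edges \ E, N.lab⟩

/-- One step of cleaning up: delete an unlabelled outdegree-0 node, or suppress an
indegree-1 outdegree-1 node.  (In this simple-digraph encoding the parallel-edge rule
is subsumed: the inserted edge merges with an existing one, and the endpoints are then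
suppressed by further steps.) -/
inductive CleanStep {α : Type} : Net α → Net α → Prop
  | delNode (N : Net α) (v : ℕ) (hv : v ∈ N.verts) (h0 : N.outdeg v = 0)
      (hlab : N.lab v = none) : CleanStep N (N.deleteNode v)
  | suppress (N : Net α) (u v w : ℕ) (h1 : N.indeg v = 1) (h2 : N.outdeg v = 1)
      (hu : N.Edge u v) (hw : N.Edge v w) :
      CleanStep N ⟨N.verts.erase v,
        insert (u, w) (N.edges.filter fun e => e.1 ≠ v ∧ e.2 ≠ v), N.lab⟩

/-- `N` cleans up to `M`: apply clean-up steps until none applies. -/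
def CleansTo (N M : Net α) : Prop :=
  Relation.ReflTransGen CleanStep N M ∧ ∀ M', ¬ CleanStep M M'

/-- Maximum subnetwork: delete one reticulation edge and clean up. -/
def IsMaxSubnet (N M : Net α) : Prop :=
  ∃ e, N.IsReticEdge e ∧ CleansTo (N.deleteEdge e) M

/-- A reticulation edge is valid if deleting it and cleaning up removes exactly
2 nodes and 3 edges. -/
def ValidEdge (N : Net α) (e : ℕ × ℕ) : Prop :=
  N.IsReticEdge e ∧
  ∀ M, CleansTo (N.deleteEdge e) M →
    M.verts.card + 2 = N.verts.card ∧ M.edges.card + 3 = N.edges.card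

/-- A valid network: all reticulation edges are valid. -/
def Valid (N : Net α) : Prop :=
  N.IsNetwork ∧ ∀ e, N.IsReticEdge e → N.ValidEdge e

def Subgraph (M N : Net α) : Prop :=
  M.verts ⊆ N.verts ∧ M.edges ⊆ N.edges ∧ ∀ v ∈ M.verts, M.lab v = N.lab v

/-- One edge-subdivision step. -/
inductive SubdivStep {α : Type} : Net α → Net α → Prop
  | mk (N : Net α) (u v w : ℕ) (he : N.Edge u v) (hw : w ∉ N.verts) :
      SubdivStep N ⟨insert w N.verts,
        insert (u, w) (insert (w, v) (N.edges.erase (u, v))), N.lab⟩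

/-- `M` is a subdivision of `N`. -/
def Subdivision (N M : Net α) : Prop := Relation.ReflTransGen SubdivStep N M

/-- Isomorphism of networks (preserving leaf labels). -/
def Iso (N M : Net α) : Prop :=
  ∃ f : ℕ → ℕ, Set.BijOn f ↑N.verts ↑M.verts ∧
    (∀ u ∈ N.verts, ∀ v ∈ N.verts, (N.Edge u v ↔ M.Edge (f u) (f v))) ∧
    ∀ v ∈ N.verts, N.lab v = M.lab (f v)

/-- `N` displays `M`: some subgraph of `N` is (isomorphic to) a subdivision of `M`. -/
def Displays (N M : Net α) : Prop :=
  ∃ S M', Subgraph S N ∧ Subdivision M M' ∧ Iso M' S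

/-- Leaf-descendant (label) set of a node. -/
def descSet (N : Net α) (v : ℕ) : Set α :=
  {x | ∃ l, N.lab l = some x ∧ N.Reaches v l}

def Adj (N : Net α) (u v : ℕ) : Prop := N.Edge u v ∨ N.Edge v u

def ConnectedIn (N : Net α) (S : Finset ℕ) (u v : ℕ) : Prop :=
  Relation.ReflTransGen (fun a b => a ∈ S ∧ b ∈ S ∧ N.Adj a b) u v

/-- A biconnected vertex set: at least 3 nodes, connected, and no cut-node. -/
def BiconnectedSet (N : Net α) (S : Finset ℕ) : Prop :=
  3 ≤ S.card ∧ S ⊆ N.verts ∧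
  (∀ u ∈ S, ∀ v ∈ S, N.ConnectedIn S u v) ∧
  ∀ c ∈ S, ∀ u ∈ S.erase c, ∀ v ∈ S.erase c, N.ConnectedIn (S.erase c) u v

/-- A biconnected component: a maximal biconnected set. -/
def BlobSet (N : Net α) (S : Finset ℕ) : Prop :=
  N.BiconnectedSet S ∧ ∀ T, N.BiconnectedSet T → S ⊆ T → S = T

/-- A blob: either a biconnected component, or a tree node in no biconnected component. -/
def IsBlob (N : Net α) (S : Finset ℕ) : Prop :=
  N.BlobSet S ∨ ∃ t, S = {t} ∧ N.IsTreeNode t ∧ ∀ T, N.BlobSet T → t ∉ T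

/-- The top node of a blob: the node of the blob from which all its nodes are reachable. -/
def TopNode (N : Net α) (S : Finset ℕ) (v : ℕ) : Prop :=
  v ∈ S ∧ ∀ u ∈ S, N.Reaches v u

/-- The blob tree of `N` contains a blob node labelled `A`. -/
def HasBlobNode (N : Net α) (A : Set α) : Prop :=
  ∃ S v, N.IsBlob S ∧ N.TopNode S v ∧ N.descSet v = A

/-- The blob tree of `N` has an edge from blob node `A` to blob node `B`. -/
def BTEdge (N : Net α) (A B : Set α) : Prop :=
  ∃ S T u v, N.IsBlob S ∧ N.IsBlob T ∧ S ≠ T ∧ N.TopNode S u ∧ N.TopNode T v ∧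
    N.descSet u = A ∧ N.descSet v = B ∧ ∃ w ∈ S, N.Edge w v

def reticCount (N : Net α) (S : Finset ℕ) : ℕ := (S.filter fun v => N.IsRetic v).card

/-- `N` is a level-`k` network. -/
def IsLevel (N : Net α) (k : ℕ) : Prop :=
  (∀ S, N.BiconnectedSet S → N.reticCount S ≤ k) ∧
  (k = 0 ∨ ∃ S, N.BiconnectedSet S ∧ N.reticCount S = k)

/-- `M` is a maximum lower-level subnetwork (MLLS) of the level-`k` network `N`:
obtained by deleting exactly one valid reticulation edge from every level-`k`
biconnected component and cleaning up. -/
def IsMLLS (N : Net α) (k : ℕ) (M : Net α) : Prop :=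
  ∃ E : Finset (ℕ × ℕ),
    (∀ e ∈ E, N.ValidEdge e) ∧
    (∀ S, N.BlobSet S → N.reticCount S = k → ∃! e, e ∈ E ∧ e.1 ∈ S ∧ e.2 ∈ S) ∧
    (∀ e ∈ E, ∃ S, N.BlobSet S ∧ N.reticCount S = k ∧ e.1 ∈ S ∧ e.2 ∈ S) ∧
    CleansTo (N.deleteEdges E) M

/-- A cherry on two leaves. -/
def Cherry (N : Net α) (x y : ℕ) : Prop :=
  N.IsLeaf x ∧ N.IsLeaf y ∧ x ≠ y ∧ ∃ p, N.Edge p x ∧ N.Edge p y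

/-- A reticulated cherry on two leaves, with the reticulation on `y`. -/
def RetCherry (N : Net α) (x y : ℕ) : Prop :=
  N.IsLeaf x ∧ N.IsLeaf y ∧
  ∃ p r, N.IsRetic r ∧ N.Edge r y ∧ N.Edge p x ∧ N.Edge p r

/-- A reticulated cherry shape on non-reticulation nodes `x, y` with nodes
`px, py, gy` and edges `(px,x), (px,py), (gy,py), (py,y)`, `py` a reticulation. -/
def RetCherryShape (N : Net α) (x y px py gy : ℕ) : Prop :=
  ¬ N.IsRetic x ∧ ¬ N.IsRetic y ∧ N.IsRetic py ∧ px ≠ gy ∧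
  N.Edge px x ∧ N.Edge px py ∧ N.Edge gy py ∧ N.Edge py y

def DirPath (N : Net α) (l : List ℕ) : Prop := l ≠ [] ∧ l.Chain' N.Edge

/-- `l` is the node sequence of an up-down path from `x` to `y`: a directed path from
an apex down to `x`, reversed, followed by a directed path from the apex down to `y`. -/
def IsUpDownPath (N : Net α) (x y : ℕ) (l : List ℕ) : Prop :=
  ∃ p q : List ℕ, N.DirPath p ∧ N.DirPath q ∧ p.head? = q.head? ∧
    p.getLast? = some x ∧ q.getLast? = some y ∧ l = p.reverse ++ q.tail

/-- `n` is the shortest up-down distance between `x` and `y` (an up-down path with `n`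
edges has `n+1` nodes). -/
def IsUpDownDist (N : Net α) (x y n : ℕ) : Prop :=
  (∃ l, N.IsUpDownPath x y l ∧ l.length = n + 1) ∧
  ∀ l, N.IsUpDownPath x y l → n + 1 ≤ l.length

def relabel (N : Net α) (f : α → β) : Net β :=
  ⟨N.verts, N.edges, fun v => (N.lab v).map f⟩

/-- Collapse the pendant subnetwork rooted at `y` to a single leaf labelled `A`. -/
def collapseAt (N : Net α) (y : ℕ) (A : α) : Net α :=
  ⟨N.verts.filter (fun v => v = y ∨ ¬ N.Reaches y v),
   N.edges.filter (fun e => ¬ N.Reaches y e.1),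
   fun v => if v = y then some A else N.lab v⟩

/-- Leaf-descendant set for networks whose leaves are labelled by sets of taxa. -/
def descUnion (N : Net (Set α)) (v : ℕ) : Set α :=
  {x | ∃ l s, N.lab l = some s ∧ x ∈ s ∧ N.Reaches v l}

def HasBlobNodeU (N : Net (Set α)) (A : Set α) : Prop :=
  ∃ S v, N.IsBlob S ∧ N.TopNode S v ∧ N.descUnion v = A

/-- `M` is a subnetwork of `N`: displayed by `N` and not `N` itself. -/
def Subnet (N M : Net α) : Prop := M.IsNetwork ∧ N.Displays M ∧ ¬ N.Iso M

/-- Equality of sets of networks up to isomorphism. -/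
def SetEquiv (S T : Set (Net α)) : Prop :=
  ∀ M, (∃ M₁ ∈ S, Iso M M₁) ↔ ∃ M₂ ∈ T, Iso M M₂

/-- The subnetworks of `N` of level at most `k - 1`. -/
def lowerSubnets (N : Net α) (k : ℕ) : Set (Net α) :=
  {M | N.Subnet M ∧ ∃ j < k, M.IsLevel j}

/-- The set of all MLLSs of `N`. -/
def mllsSet (N : Net α) : Set (Net α) :=
  {M | ∃ k, N.IsLevel k ∧ N.IsMLLS k M}

end Net

/-!
In a tree-child network every node `v` has a path to a leaf through nodes of indegree one, so
any node whose leaf-descendant set contains that of `v` is comparable with `v`. Let `c` be a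
child of `x` of indegree one. Since `y` does not reach `x`, comparability forces `c` to reach
`y`. The other child `r` of `x` is a reticulation, since two comparable children of indegree one
would give a cycle through `x`; and `y` reaches `r`, since otherwise `r` would have the same
leaf-descendant set as its parent, which the tree-child property forbids for a reticulation.
-/

namespace Net

variable {X : Type} {N : Net X}

def TreePath (N : Net X) : ℕ → ℕ → Prop :=
  Relation.ReflTransGen (fun a b => N.Edge a b ∧ N.indeg b = 1)

theorem TreePath.reaches {v l : ℕ} (h : N.TreePath v l) : N.Reaches v l :=
  Relation.ReflTransGen.mono (fun _ _ hab => hab.1) _ _ h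

theorem descSet_subset_of_reaches {u v : ℕ} (h : N.Reaches u v) :
    N.descSet v ⊆ N.descSet u := by
  rintro a ⟨l, hl, hvl⟩
  exact ⟨l, hl, h.trans hvl⟩

theorem eq_of_edge_of_indeg_eq_one {w p q : ℕ} (hw : N.indeg w = 1)
    (hp : N.Edge p w) (hq : N.Edge q w) : p = q :=
  congrArg Prod.fst <| Finset.card_le_one.1 hw.le _ (Finset.mem_filter.2 ⟨hp, rfl⟩) _
    (Finset.mem_filter.2 ⟨hq, rfl⟩)

theorem reaches_parent_of_reaches {u w p : ℕ} (h : N.Reaches u w) (hne : u ≠ w)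
    (hw : N.indeg w = 1) (hp : N.Edge p w) : N.Reaches u p := by
  rcases h.cases_tail with rfl | ⟨m, hum, hmw⟩
  · exact absurd rfl hne
  · rwa [eq_of_edge_of_indeg_eq_one hw hmw hp] at hum

theorem TreePath.reaches_or_reaches {v l u : ℕ} (hvl : N.TreePath v l)
    (hul : N.Reaches u l) : N.Reaches u v ∨ N.Reaches v u := by
  induction hvl generalizing u with
  | refl => exact Or.inl hul
  | @tail m l hvm hml ih =>
    by_cases hu : u = l
    · exact Or.inr (hu ▸ (TreePath.reaches hvm).tail hml.1)
    · exact ih (reaches_parent_of_reaches hul hu hml.2 hml.1)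

theorem indeg_pos_of_edge {u v : ℕ} (h : N.Edge u v) : 0 < N.indeg v :=
  Finset.card_pos.2 ⟨(u, v), Finset.mem_filter.2 ⟨h, rfl⟩⟩

theorem outdeg_pos_of_edge {u v : ℕ} (h : N.Edge u v) : 0 < N.outdeg u :=
  Finset.card_pos.2 ⟨(u, v), Finset.mem_filter.2 ⟨h, rfl⟩⟩

theorem exists_edge_ne_of_outdeg_eq_two {x : ℕ} (hx : N.outdeg x = 2) (c : ℕ) :
    ∃ r, N.Edge x r ∧ r ≠ c := by
  obtain ⟨⟨x', r⟩, he, hne⟩ :=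
    Finset.exists_mem_ne (s := N.edges.filter fun e => e.1 = x) (by unfold outdeg at hx; omega)
      (x, c)
  obtain ⟨hedge, rfl : x' = x⟩ := Finset.mem_filter.1 he
  exact ⟨r, hedge, fun h => hne (h ▸ rfl)⟩

namespace IsNetwork

theorem mem_verts_of_edge (hN : N.IsNetwork) {u v : ℕ} (h : N.Edge u v) :
    u ∈ N.verts ∧ v ∈ N.verts :=
  hN.1 _ h

theorem not_reaches_of_edge (hN : N.IsNetwork) {u v : ℕ} (h : N.Edge u v) :
    ¬ N.Reaches v u :=
  hN.2.1 u v h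

theorem exists_lab_of_isLeaf (hN : N.IsNetwork) {l : ℕ} (hl : N.IsLeaf l) :
    ∃ a, N.lab l = some a :=
  (hN.2.2.2.2.1 l).2 hl

theorem eq_of_lab_eq (hN : N.IsNetwork) {l l' : ℕ} {a : X} (hl : N.lab l = some a)
    (hl' : N.lab l' = some a) : l = l' :=
  (hN.2.2.2.2.2 a).unique hl hl'

theorem wellFounded_edge (hN : N.IsNetwork) : WellFounded (flip N.Edge) := by
  refine (measure fun u => (N.verts.filter (N.Reaches u)).card).wf.mono fun v u huv => ?_
  refine Finset.card_lt_card ⟨fun w hw => ?_, fun hsub => ?_⟩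
  · obtain ⟨hw, hvw⟩ := Finset.mem_filter.1 hw
    exact Finset.mem_filter.2 ⟨hw, hvw.head huv⟩
  · have hu : u ∈ N.verts.filter (N.Reaches u) :=
      Finset.mem_filter.2 ⟨(hN.mem_verts_of_edge huv).1, Relation.ReflTransGen.refl⟩
    exact hN.not_reaches_of_edge huv (Finset.mem_filter.1 (hsub hu)).2

theorem indeg_eq_one_of_edge {p c : ℕ} (hN : N.IsNetwork) (hpc : N.Edge p c)
    (hc : ¬ N.IsRetic c) : N.indeg c = 1 := by
  rcases hN.2.2.2.1 c (hN.mem_verts_of_edge hpc).2 with h | h | h | h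
  · exact absurd h.2.1 (indeg_pos_of_edge hpc).ne'
  · exact h.2.1
  · exact h.2.1
  · exact absurd h hc

theorem not_reaches_sibling (hN : N.IsNetwork) {x c r : ℕ} (hc : N.Edge x c)
    (hr : N.Edge x r) (hne : c ≠ r) (hr1 : N.indeg r = 1) : ¬ N.Reaches c r :=
  fun hcr => hN.not_reaches_of_edge hc (reaches_parent_of_reaches hcr hne hr1 hr)

end IsNetwork

namespace TreeChild

theorem exists_edge_indeg_eq_one (hN : N.TreeChild) {v : ℕ} (hv : v ∈ N.verts)
    (hleaf : ¬ N.IsLeaf v) : ∃ c, N.Edge v c ∧ N.indeg c = 1 := by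
  obtain ⟨c, hvc, hc | hc⟩ := hN.2 v hv hleaf
  exacts [⟨c, hvc, hc.2.1⟩, ⟨c, hvc, hc.2.1⟩]

theorem exists_treePath_isLeaf (hN : N.TreeChild) {v : ℕ} (hv : v ∈ N.verts) :
    ∃ l, N.IsLeaf l ∧ N.TreePath v l := by
  induction v using hN.1.wellFounded_edge.induction with
  | h v ih =>
    by_cases hleaf : N.IsLeaf v
    · exact ⟨v, hleaf, Relation.ReflTransGen.refl⟩
    obtain ⟨c, hvc, hc⟩ := hN.exists_edge_indeg_eq_one hv hleaf
    obtain ⟨l, hl, hcl⟩ := ih c hvc (hN.1.mem_verts_of_edge hvc).2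
    exact ⟨l, hl, Relation.ReflTransGen.head ⟨hvc, hc⟩ hcl⟩

theorem reaches_or_reaches_of_descSet_subset (hN : N.TreeChild) {t u : ℕ}
    (hu : u ∈ N.verts) (hsub : N.descSet u ⊆ N.descSet t) : N.Reaches t u ∨ N.Reaches u t := by
  obtain ⟨l, hl, hul⟩ := hN.exists_treePath_isLeaf hu
  obtain ⟨a, ha⟩ := hN.1.exists_lab_of_isLeaf hl
  obtain ⟨l', ha', htl'⟩ := hsub ⟨l, ha, hul.reaches⟩
  obtain rfl : l' = l := hN.1.eq_of_lab_eq ha' ha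
  exact hul.reaches_or_reaches htl'

/-- A child of indegree one of a counterexample is again a counterexample, lower down. -/
theorem not_descSet_subset_of_isRetic (hN : N.TreeChild) {u r : ℕ} (hr : N.IsRetic r)
    (hur : N.Reaches u r) (hru : ¬ N.Reaches r u) : ¬ N.descSet u ⊆ N.descSet r := by
  induction u using hN.1.wellFounded_edge.induction with
  | h u ih =>
    intro hsub
    obtain ⟨w₀, huw₀, -⟩ :=
      hur.cases_head.resolve_left fun h => hru (h ▸ Relation.ReflTransGen.refl)
    have hleaf : ¬ N.IsLeaf u := fun hl => (outdeg_pos_of_edge huw₀).ne' hl.2.2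
    obtain ⟨w, huw, hw⟩ := hN.exists_edge_indeg_eq_one (hN.1.mem_verts_of_edge huw₀).1 hleaf
    have hw_ne : w ≠ r := by rintro rfl; exact absurd (hw.symm.trans hr.2.1) (by decide)
    have hrw : ¬ N.Reaches r w := fun h => hru (reaches_parent_of_reaches h hw_ne.symm hw huw)
    have hsubw := (descSet_subset_of_reaches (.single huw)).trans hsub
    have hwr := (hN.reaches_or_reaches_of_descSet_subset
      (hN.1.mem_verts_of_edge huw).2 hsubw).resolve_left hrw
    exact ih w huw hwr hrw hsubw

theorem exists_isRetic_child_of_descSet_eq (hN : N.TreeChild) {x y : ℕ} (hx : N.IsTreeNode x)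
    (hdesc : N.descSet y = N.descSet x) (hnreach : ¬ N.Reaches y x) :
    ∃ r, N.Edge x r ∧ N.IsRetic r ∧ N.Reaches x y ∧ N.Reaches y r := by
  have hnet := hN.1
  obtain ⟨c, hxc, hc⟩ := hN.exists_edge_indeg_eq_one hx.1 fun hl =>
    absurd (hl.2.2.symm.trans hx.2.2) (by decide)
  have hcy : N.Reaches c y := by
    have hsub : N.descSet c ⊆ N.descSet y := hdesc ▸ descSet_subset_of_reaches (.single hxc)
    rcases hN.reaches_or_reaches_of_descSet_subset (hnet.mem_verts_of_edge hxc).2 hsub with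
      hyc | hcy
    · rcases eq_or_ne y c with rfl | hne
      · exact Relation.ReflTransGen.refl
      · exact absurd (reaches_parent_of_reaches hyc hne hc hxc) hnreach
    · exact hcy
  obtain ⟨r, hxr, hrc_ne⟩ := exists_edge_ne_of_outdeg_eq_two hx.2.2 c
  have hrv := (hnet.mem_verts_of_edge hxr).2
  have hr : N.IsRetic r := by
    by_contra hr
    have hsub : N.descSet r ⊆ N.descSet c := calc
      N.descSet r ⊆ N.descSet x := descSet_subset_of_reaches (.single hxr)
      _ = N.descSet y := hdesc.symm
      _ ⊆ N.descSet c := descSet_subset_of_reaches hcy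
    rcases hN.reaches_or_reaches_of_descSet_subset hrv hsub with hcr | hrc
    · exact hnet.not_reaches_sibling hxc hxr hrc_ne.symm (hnet.indeg_eq_one_of_edge hxr hr) hcr
    · exact hnet.not_reaches_sibling hxr hxc hrc_ne hc hrc
  refine ⟨r, hxr, hr, .head hxc hcy, ?_⟩
  have hsub : N.descSet r ⊆ N.descSet y := hdesc ▸ descSet_subset_of_reaches (.single hxr)
  refine (hN.reaches_or_reaches_of_descSet_subset hrv hsub).resolve_right fun hry => ?_
  exact hN.not_descSet_subset_of_isRetic hr (.single hxr) (hnet.not_reaches_of_edge hxr)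
    (hdesc ▸ descSet_subset_of_reaches hry)

end TreeChild

end Net

/-- In a tree-child network, if `x` is a highest tree node with
leaf-descendant set `A`, then any other tree node `y` with leaf-descendant set `A`
is below `x` and above a reticulation child `r` of `x`; moreover `x` is the unique
highest such tree node. -/
theorem highest_treeNode_with_descSet {X : Type} (N : Net X) (hN : N.TreeChild)
    (A : Set X) (x : ℕ) (hx : N.IsTreeNode x) (hdx : N.descSet x = A)
    (hhigh : ∀ y, N.IsTreeNode y → N.descSet y = A → y ≠ x → ¬ N.Reaches y x) :
    (∀ y, N.IsTreeNode y → N.descSet y = A → y ≠ x →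
      ∃ r, N.Edge x r ∧ N.IsRetic r ∧ N.Reaches x y ∧ N.Reaches y r) ∧
    (∀ x', N.IsTreeNode x' → N.descSet x' = A →
      (∀ y, N.IsTreeNode y → N.descSet y = A → y ≠ x' → ¬ N.Reaches y x') →
      x' = x) := by
  have below_x : ∀ y, N.IsTreeNode y → N.descSet y = A → y ≠ x →
      ∃ r, N.Edge x r ∧ N.IsRetic r ∧ N.Reaches x y ∧ N.Reaches y r :=
    fun y hy hdy hyx =>
      hN.exists_isRetic_child_of_descSet_eq hx (hdy.trans hdx.symm) (hhigh y hy hdy hyx)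
  refine ⟨below_x, fun x' hx' hdx' hhigh' => ?_⟩
  by_contra hne
  obtain ⟨-, -, -, hxx', -⟩ := below_x x' hx' hdx' hne
  exact hhigh' x hx hdx (Ne.symm hne) hxx'
end
end

section
/- In a binary tree-child phylogenetic network, every reticulation r is contained in a reticulated cherry shape: there exist non-reticulation nodes x and y and a node p such that r is the parent of y and p is the parent of both x and r. -/
open scoped Classical
noncomputable section

/-- In a binary tree-child network, every reticulation is contained in a
reticulated cherry shape. -/
theorem retic_in_retCherryShape {X : Type} (N : Net X) (hN : N.TreeChild)
    (r : ℕ) (hr : N.IsRetic r) :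
    ∃ x y px gy, N.RetCherryShape x y px r gy := by
  obtain ⟨hNet, htc⟩ := hN
  obtain ⟨hvin, _, _, _, _, _⟩ := hNet
  obtain ⟨hrv, hin, hout⟩ := hr
  -- child of r
  have h1 : (N.edges.filter fun e => e.1 = r).Nonempty := by
    rw [← Finset.card_pos]
    show 0 < N.outdeg r
    omega
  obtain ⟨ey, hey⟩ := h1
  rw [Finset.mem_filter] at hey
  have hry : N.Edge r ey.2 := by
    have : (r, ey.2) = ey := by
      ext <;> simp [hey.2]
    simpa [Net.Edge, this] using hey.1
  -- two distinct parents
  have h2 : 1 < (N.edges.filter fun e => e.2 = r).card := by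
    show 1 < N.indeg r
    omega
  obtain ⟨ea, hea, eb, heb, hab⟩ := Finset.one_lt_card.mp h2
  rw [Finset.mem_filter] at hea heb
  have hpa : N.Edge ea.1 r := by
    have : (ea.1, r) = ea := by ext <;> simp [hea.2]
    simpa [Net.Edge, this] using hea.1
  have hpb : N.Edge eb.1 r := by
    have : (eb.1, r) = eb := by ext <;> simp [heb.2]
    simpa [Net.Edge, this] using heb.1
  have hab1 : ea.1 ≠ eb.1 := by
    intro h
    exact hab (Prod.ext h (hea.2.trans heb.2.symm))
  -- r is not a leaf
  have hrnl : ¬ N.IsLeaf r := by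
    rintro ⟨_, _, h0⟩; omega
  obtain ⟨c, hrc, hc⟩ := htc r hrv hrnl
  have hcnr : ¬ N.IsRetic c := by
    rcases hc with h | h
    · rintro ⟨_, h2, _⟩; exact absurd (h.2.1.symm.trans h2) (by norm_num)
    · rintro ⟨_, _, h1⟩; exact absurd (h.2.2.symm.trans h1) (by norm_num)
  -- p := ea.1 is not a leaf (it has an out-edge), so it has a non-retic child
  have hpv : ea.1 ∈ N.verts := (hvin _ hpa).1
  have hpnl : ¬ N.IsLeaf ea.1 := by
    rintro ⟨_, _, h0⟩
    have : (ea.1, r) ∈ N.edges.filter fun e => e.1 = ea.1 := by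
      simp [Finset.mem_filter, hpa, Net.Edge] at *
      exact hpa
    have := Finset.card_pos.mpr ⟨_, this⟩
    have h0' : (N.edges.filter fun e => e.1 = ea.1).card = 0 := h0
    omega
  obtain ⟨x, hpx, hx⟩ := htc ea.1 hpv hpnl
  have hxnr : ¬ N.IsRetic x := by
    rcases hx with h | h
    · rintro ⟨_, h2, _⟩; exact absurd (h.2.1.symm.trans h2) (by norm_num)
    · rintro ⟨_, _, h1⟩; exact absurd (h.2.2.symm.trans h1) (by norm_num)
  exact ⟨x, c, ea.1, eb.1, hxnr, hcnr, ⟨hrv, hin, hout⟩, hab1, hpx, hpa, hpb, hrc⟩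
end
end

section
/- In a binary tree-child phylogenetic network, every biconnected component containing at least one reticulation contains a reticulation that lies in a reticulated cherry shape formed by two nodes that are outside that biconnected component. -/
open scoped Classical
noncomputable section

namespace NetAux

open Net Relation

variable {α : Type}

/-- measure: number of vertices strictly reachable from `v`. -/
def mea (N : Net α) (v : ℕ) : ℕ :=
  (N.verts.filter fun u => Relation.TransGen N.Edge v u).card

lemma irrefl_trans {N : Net α} (hac : ∀ u v, N.Edge u v → ¬ N.Reaches v u) (v : ℕ) :
    ¬ Relation.TransGen N.Edge v v := by
  intro h
  obtain ⟨b, hb, hbv⟩ := Relation.TransGen.head'_iff.mp h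
  exact hac v b hb hbv

lemma mea_lt {N : Net α} (hve : ∀ e ∈ N.edges, e.1 ∈ N.verts ∧ e.2 ∈ N.verts)
    (hac : ∀ u v, N.Edge u v → ¬ N.Reaches v u) {p q : ℕ}
    (h : Relation.TransGen N.Edge p q) : mea N q < mea N p := by
  apply Finset.card_lt_card
  have hsub : (N.verts.filter fun u => Relation.TransGen N.Edge q u) ⊆
      (N.verts.filter fun u => Relation.TransGen N.Edge p u) := by
    intro u hu
    rw [Finset.mem_filter] at hu ⊢
    exact ⟨hu.1, h.trans hu.2⟩
  rw [Finset.ssubset_iff_of_subset hsub]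
  refine ⟨q, ?_, ?_⟩
  · rw [Finset.mem_filter]
    obtain ⟨b, _, hbq⟩ := Relation.TransGen.tail'_iff.mp h
    exact ⟨(hve _ hbq).2, h⟩
  · rw [Finset.mem_filter]
    rintro ⟨-, h'⟩
    exact irrefl_trans hac q h'

lemma parent_unique {N : Net α} {v a b : ℕ} (h1 : N.indeg v ≤ 1)
    (ha : N.Edge a v) (hb : N.Edge b v) : a = b := by
  have := Finset.card_le_one.mp h1 (a, v) ?_ (b, v) ?_
  · exact congrArg Prod.fst this
  · exact Finset.mem_filter.mpr ⟨ha, rfl⟩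
  · exact Finset.mem_filter.mpr ⟨hb, rfl⟩

lemma child_unique {N : Net α} {v a b : ℕ} (h1 : N.outdeg v ≤ 1)
    (ha : N.Edge v a) (hb : N.Edge v b) : a = b := by
  have := Finset.card_le_one.mp h1 (v, a) ?_ (v, b) ?_
  · exact congrArg Prod.snd this
  · exact Finset.mem_filter.mpr ⟨ha, rfl⟩
  · exact Finset.mem_filter.mpr ⟨hb, rfl⟩

lemma not_leaf_of_edge {N : Net α} {v w : ℕ} (h : N.Edge v w) : ¬ N.IsLeaf v := by
  rintro ⟨-, -, h0⟩
  rw [Net.outdeg] at h0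
  have : (v, w) ∈ N.edges.filter fun e => e.1 = v := Finset.mem_filter.mpr ⟨h, rfl⟩
  have := Finset.card_pos.mpr ⟨_, this⟩
  omega

lemma two_le_card_erase {S : Finset ℕ} {c : ℕ} (h3 : 3 ≤ S.card) (hc : c ∈ S) :
    2 ≤ (S.erase c).card := by
  have := Finset.card_erase_of_mem hc
  omega

/-- Every non-reticulation node of a biconnected set has a child in the set. -/
lemma hasChildInS {N : Net α} {S : Finset ℕ} (h3 : 3 ≤ S.card)
    (hconn : ∀ u ∈ S, ∀ v ∈ S, N.ConnectedIn S u v)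
    (hcut : ∀ c ∈ S, ∀ u ∈ S.erase c, ∀ v ∈ S.erase c, N.ConnectedIn (S.erase c) u v)
    (hirr : ∀ w, ¬ N.Edge w w)
    {v : ℕ} (hv : v ∈ S) (hin : N.indeg v ≤ 1) : ∃ c ∈ S, N.Edge v c := by
  by_contra hno
  push_neg at hno
  by_cases hp : ∃ p ∈ S, N.Edge p v
  · obtain ⟨p, hpS, hpv⟩ := hp
    have hvp : v ≠ p := fun h => hirr v (h ▸ hpv)
    have h2 : 2 ≤ (S.erase p).card := two_le_card_erase h3 hpS
    have : ((S.erase p).erase v).Nonempty := by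
      rw [← Finset.card_pos]
      have := Finset.card_erase_of_mem (Finset.mem_erase.mpr ⟨hvp, hv⟩)
      omega
    obtain ⟨u, hu⟩ := this
    have huv : u ≠ v := (Finset.mem_erase.mp hu).1
    have hu' : u ∈ S.erase p := (Finset.mem_erase.mp hu).2
    have hcon := hcut p hpS v (Finset.mem_erase.mpr ⟨hvp, hv⟩) u hu'
    rcases Relation.ReflTransGen.cases_head hcon with h | ⟨b, ⟨-, hbS, hadj⟩, -⟩
    · exact huv h.symm
    · rcases hadj with h | h
      · exact hno b (Finset.mem_of_mem_erase hbS) h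
      · exact (Finset.mem_erase.mp hbS).1 (parent_unique hin h hpv)
  · push_neg at hp
    have : (S.erase v).Nonempty := by
      rw [← Finset.card_pos]
      have := two_le_card_erase h3 hv
      omega
    obtain ⟨u, hu⟩ := this
    have hcon := hconn v hv u (Finset.mem_of_mem_erase hu)
    rcases Relation.ReflTransGen.cases_head hcon with h | ⟨b, ⟨-, hbS, hadj⟩, -⟩
    · exact (Finset.mem_erase.mp hu).1 h.symm
    · rcases hadj with h | h
      · exact hno b hbS h
      · exact hp b hbS h

/-- Every reticulation of a biconnected set has a parent in the set. -/
lemma hasParentInS {N : Net α} {S : Finset ℕ} (h3 : 3 ≤ S.card)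
    (hconn : ∀ u ∈ S, ∀ v ∈ S, N.ConnectedIn S u v)
    (hcut : ∀ c ∈ S, ∀ u ∈ S.erase c, ∀ v ∈ S.erase c, N.ConnectedIn (S.erase c) u v)
    (hirr : ∀ w, ¬ N.Edge w w)
    {r0 : ℕ} (hr0 : r0 ∈ S) (hout : N.outdeg r0 = 1) : ∃ q ∈ S, N.Edge q r0 := by
  by_contra hno
  push_neg at hno
  have hcne : ∃ c, N.Edge r0 c := by
    have : (N.edges.filter fun e => e.1 = r0).Nonempty := by
      rw [← Finset.card_pos]
      rw [Net.outdeg] at hout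
      omega
    obtain ⟨e, he⟩ := this
    rw [Finset.mem_filter] at he
    exact ⟨e.2, by rw [Net.Edge, ← he.2]; exact he.1⟩
  obtain ⟨c, hc⟩ := hcne
  by_cases hcS : c ∈ S
  · have hrc : r0 ≠ c := fun h => hirr r0 (h ▸ hc)
    have : ((S.erase c).erase r0).Nonempty := by
      rw [← Finset.card_pos]
      have h2 := two_le_card_erase h3 hcS
      have := Finset.card_erase_of_mem (Finset.mem_erase.mpr ⟨hrc, hr0⟩)
      omega
    obtain ⟨u, hu⟩ := this
    have hcon := hcut c hcS r0 (Finset.mem_erase.mpr ⟨hrc, hr0⟩) u (Finset.mem_of_mem_erase hu)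
    rcases Relation.ReflTransGen.cases_head hcon with h | ⟨b, ⟨-, hbS, hadj⟩, -⟩
    · exact (Finset.mem_erase.mp hu).1 h.symm
    · rcases hadj with h | h
      · exact (Finset.mem_erase.mp hbS).1 (child_unique (le_of_eq hout) h hc)
      · exact hno b (Finset.mem_of_mem_erase hbS) h
  · have : (S.erase r0).Nonempty := by
      rw [← Finset.card_pos]
      have := two_le_card_erase h3 hr0
      omega
    obtain ⟨u, hu⟩ := this
    have hcon := hconn r0 hr0 u (Finset.mem_of_mem_erase hu)
    rcases Relation.ReflTransGen.cases_head hcon with h | ⟨b, ⟨-, hbS, hadj⟩, -⟩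
    · exact (Finset.mem_erase.mp hu).1 h.symm
    · rcases hadj with h | h
      · exact hcS (child_unique (le_of_eq hout) h hc ▸ hbS)
      · exact hno b hbS h

/-- Descend inside `S` from any non-reticulation node to a non-reticulation node
having a reticulation child in `S`. -/
lemma descend {N : Net α} {S : Finset ℕ}
    (hve : ∀ e ∈ N.edges, e.1 ∈ N.verts ∧ e.2 ∈ N.verts)
    (hac : ∀ u v, N.Edge u v → ¬ N.Reaches v u)
    (hD : ∀ v ∈ S, ¬ N.IsRetic v → ∃ c ∈ S, N.Edge v c) :
    ∀ n v, mea N v ≤ n → v ∈ S → ¬ N.IsRetic v →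
      ∃ q r', q ∈ S ∧ ¬ N.IsRetic q ∧ r' ∈ S ∧ N.IsRetic r' ∧ N.Edge q r' ∧
        Relation.ReflTransGen N.Edge v q := by
  intro n
  induction n with
  | zero =>
    intro v hm hv hnr
    obtain ⟨c, hcS, hvc⟩ := hD v hv hnr
    by_cases hcr : N.IsRetic c
    · exact ⟨v, c, hv, hnr, hcS, hcr, hvc, Relation.ReflTransGen.refl⟩
    · exfalso
      have := mea_lt hve hac (Relation.TransGen.single hvc)
      omega
  | succ n ih =>
    intro v hm hv hnr
    obtain ⟨c, hcS, hvc⟩ := hD v hv hnr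
    by_cases hcr : N.IsRetic c
    · exact ⟨v, c, hv, hnr, hcS, hcr, hvc, Relation.ReflTransGen.refl⟩
    · have hlt := mea_lt hve hac (Relation.TransGen.single hvc)
      obtain ⟨q, r', hqS, hqnr, hr'S, hr'r, hqr', hreach⟩ :=
        ih c (by omega) hcS hcr
      exact ⟨q, r', hqS, hqnr, hr'S, hr'r, hqr', Relation.ReflTransGen.head hvc hreach⟩

end NetAux

/-- In a binary tree-child network, every biconnected component containing
a reticulation contains a reticulation lying in a reticulated cherry shape formed by two
nodes outside the biconnected component. -/
theorem blob_has_retCherryShape_outside {X : Type} (N : Net X) (hN : N.TreeChild)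
    (S : Finset ℕ) (hS : N.BlobSet S) (hret : ∃ r ∈ S, N.IsRetic r) :
    ∃ r x y px gy, r ∈ S ∧ N.IsRetic r ∧ N.RetCherryShape x y px r gy ∧
      x ∉ S ∧ y ∉ S := by
  obtain ⟨hNet, htc⟩ := hN
  obtain ⟨hve, hac, -, hclass, -, -⟩ := hNet
  have hirr : ∀ w, ¬ N.Edge w w := fun w h => hac w w h Relation.ReflTransGen.refl
  obtain ⟨⟨h3, hsubv, hconn, hcut⟩, -⟩ := hS
  -- non-reticulations have indegree at most 1
  have hind : ∀ v ∈ N.verts, ¬ N.IsRetic v → N.indeg v ≤ 1 := by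
    intro v hv hnr
    rcases hclass v hv with h | h | h | h
    · simp [h.2.1]
    · simp [h.2.1]
    · simp [h.2.1]
    · exact absurd h hnr
  have hD : ∀ v ∈ S, ¬ N.IsRetic v → ∃ c ∈ S, N.Edge v c := fun v hv hnr =>
    NetAux.hasChildInS h3 hconn hcut hirr hv (hind v (hsubv hv) hnr)
  -- tree nodes and leaves are not reticulations
  have hnr_of_tl : ∀ z, (N.IsTreeNode z ∨ N.IsLeaf z) → ¬ N.IsRetic z := by
    rintro z (h | h) hr
    · have h1 := h.2.1
      have h2 := hr.2.1
      omega
    · have h1 := h.2.1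
      have h2 := hr.2.1
      omega
  -- a parent of a reticulation is not a reticulation
  have hparent_nr : ∀ q rr, N.IsRetic rr → N.Edge q rr → ¬ N.IsRetic q := by
    intro q rr hrr hq hqret
    have hqv : q ∈ N.verts := (hve _ hq).1
    obtain ⟨c, hqc, hc⟩ := htc q hqv (NetAux.not_leaf_of_edge hq)
    have hcr : c = rr := NetAux.child_unique (le_of_eq hqret.2.2) hqc hq
    exact hnr_of_tl rr (hcr ▸ hc) hrr
  -- the set of candidate parents
  set P : Finset ℕ :=
    S.filter (fun q => ¬ N.IsRetic q ∧ ∃ rr ∈ S, N.IsRetic rr ∧ N.Edge q rr) with hP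
  have hPne : P.Nonempty := by
    obtain ⟨r0, hr0S, hr0⟩ := hret
    obtain ⟨q, hqS, hq⟩ := NetAux.hasParentInS h3 hconn hcut hirr hr0S hr0.2.2
    exact ⟨q, Finset.mem_filter.mpr ⟨hqS, hparent_nr q r0 hr0 hq, r0, hr0S, hr0, hq⟩⟩
  obtain ⟨p, hpP, hmin⟩ := P.exists_min_image (NetAux.mea N) hPne
  obtain ⟨hpS, hpnr, r, hrS, hrret, hpr⟩ := Finset.mem_filter.mp hpP
  -- the sibling x of r below p
  obtain ⟨x, hpx, hx⟩ := htc p (hsubv hpS) (NetAux.not_leaf_of_edge hpr)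
  have hxnr : ¬ N.IsRetic x := hnr_of_tl x hx
  -- the child y of r
  have hrnl : ¬ N.IsLeaf r := by
    intro h
    have h1 := h.2.2
    have h2 := hrret.2.2
    omega
  obtain ⟨y, hry, hy⟩ := htc r (hsubv hrS) hrnl
  have hynr : ¬ N.IsRetic y := hnr_of_tl y hy
  -- the second parent gy of r
  have hpmem : (p, r) ∈ N.edges.filter (fun e => e.2 = r) := Finset.mem_filter.mpr ⟨hpr, rfl⟩
  have hother : ∃ e ∈ N.edges.filter (fun e => e.2 = r), e ≠ (p, r) := by
    by_contra h
    push_neg at h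
    have hsub : N.edges.filter (fun e => e.2 = r) ⊆ {(p, r)} := fun e he =>
      Finset.mem_singleton.mpr (h e he)
    have hcard := Finset.card_le_card hsub
    rw [Finset.card_singleton] at hcard
    have h2 : N.indeg r = 2 := hrret.2.1
    rw [Net.indeg] at h2
    omega
  obtain ⟨e, he, hne⟩ := hother
  obtain ⟨a, b⟩ := e
  obtain ⟨hemem, hbr⟩ := Finset.mem_filter.mp he
  simp only at hbr
  have hgyr : N.Edge a r := by rw [← hbr]; exact hemem
  have hap : a ≠ p := fun h => hne (by rw [h, hbr])
  -- x is not in S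
  have hxnS : x ∉ S := by
    intro hxS
    obtain ⟨q, r', hqS, hqnr, hr'S, hr'r, hqr', hreach⟩ :=
      NetAux.descend hve hac hD (NetAux.mea N x) x le_rfl hxS hxnr
    have hqP : q ∈ P := Finset.mem_filter.mpr ⟨hqS, hqnr, r', hr'S, hr'r, hqr'⟩
    have hle := hmin q hqP
    have := NetAux.mea_lt hve hac (Relation.TransGen.head' hpx hreach)
    omega
  -- y is not in S
  have hynS : y ∉ S := by
    intro hyS
    obtain ⟨q, r', hqS, hqnr, hr'S, hr'r, hqr', hreach⟩ :=
      NetAux.descend hve hac hD (NetAux.mea N y) y le_rfl hyS hynr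
    have hqP : q ∈ P := Finset.mem_filter.mpr ⟨hqS, hqnr, r', hr'S, hr'r, hqr'⟩
    have hle := hmin q hqP
    have := NetAux.mea_lt hve hac
      (Relation.TransGen.head' hpr (Relation.ReflTransGen.head hry hreach))
    omega
  exact ⟨r, x, y, p, a, hrS, hrret, ⟨hxnr, hynr, hrret, hap.symm, hpx, hpr, hgyr, hry⟩,
    hxnS, hynS⟩
end
end

section
/- Every binary tree-child phylogenetic network on at least two leaves contains either a cherry (two leaves x, y with a common parent) or a reticulated cherry (two leaves x, y where the parent of y is a reticulation whose other parent is the parent of x). -/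
open scoped Classical
noncomputable section

section CherryAux

variable {α : Type}

/-- In a finite set, a preorder-with-antisymmetry relation has a minimal element. -/
lemma Net.exists_min_rel {r : ℕ → ℕ → Prop}
    (htrans : ∀ a b c, r a b → r b c → r a c)
    (hanti : ∀ a b, r a b → r b a → a = b) (S : Finset ℕ) (hS : S.Nonempty)
    (hrefl : ∀ a, r a a) :
    ∃ v ∈ S, ∀ w ∈ S, r v w → w = v := by
  obtain ⟨v, hv, hmin⟩ :=
    S.exists_min_image (fun v => (S.filter (fun w => r v w)).card) hS
  refine ⟨v, hv, fun w hw hr => ?_⟩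
  by_contra hne
  have hsub : S.filter (fun u => r w u) ⊆ S.filter (fun u => r v u) := by
    intro u hu
    simp only [Finset.mem_filter] at hu ⊢
    exact ⟨hu.1, htrans _ _ _ hr hu.2⟩
  have hss : S.filter (fun u => r w u) ⊂ S.filter (fun u => r v u) := by
    rw [Finset.ssubset_iff_of_subset hsub]
    refine ⟨v, by simp [hv, hrefl], ?_⟩
    simp only [Finset.mem_filter, not_and]
    intro _ hwv
    exact hne (hanti _ _ hr hwv).symm
  exact absurd (hmin w hw) (not_le.mpr (Finset.card_lt_card hss))

lemma Net.reaches_antisymm (N : Net α)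
    (hA : ∀ u v, N.Edge u v → ¬ N.Reaches v u)
    {v w : ℕ} (h1 : N.Reaches v w) (h2 : N.Reaches w v) : v = w := by
  rcases Relation.ReflTransGen.cases_head h1 with h | ⟨u, huv, huw⟩
  · exact h
  · exact absurd (huw.trans h2) (hA _ _ huv)

lemma Net.edge_of_outdeg_one (N : Net α) {v : ℕ} (h : N.outdeg v = 1) :
    ∃ c, N.Edge v c ∧ ∀ c', N.Edge v c' → c' = c := by
  obtain ⟨e, he⟩ := Finset.card_eq_one.mp h
  have hemem : e ∈ N.edges.filter fun x => x.1 = v := he ▸ Finset.mem_singleton_self e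
  simp only [Finset.mem_filter] at hemem
  refine ⟨e.2, ?_, fun c' hc' => ?_⟩
  · show (v, e.2) ∈ N.edges
    have : e = (v, e.2) := by
      rw [← hemem.2]
    exact this ▸ hemem.1
  · have : (v, c') ∈ N.edges.filter fun x => x.1 = v :=
      Finset.mem_filter.mpr ⟨hc', rfl⟩
    rw [he, Finset.mem_singleton] at this
    rw [← this]

lemma Net.no_edge_of_outdeg_zero (N : Net α) {v : ℕ} (h : N.outdeg v = 0) :
    ∀ c, ¬ N.Edge v c := by
  intro c hc
  have : (v, c) ∈ N.edges.filter fun x => x.1 = v :=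
    Finset.mem_filter.mpr ⟨hc, rfl⟩
  have := Finset.card_eq_zero.mp h ▸ this
  simp at this

lemma Net.eq_of_reaches_outdeg_zero (N : Net α) {v w : ℕ} (h : N.outdeg v = 0)
    (hr : N.Reaches v w) : w = v := by
  rcases Relation.ReflTransGen.cases_head hr with h' | ⟨u, huv, _⟩
  · exact h'.symm
  · exact absurd huv (N.no_edge_of_outdeg_zero h u)

lemma Net.edges_of_outdeg_two (N : Net α) {v : ℕ} (h : N.outdeg v = 2) :
    ∃ a b, a ≠ b ∧ N.Edge v a ∧ N.Edge v b ∧ ∀ c, N.Edge v c → c = a ∨ c = b := by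
  obtain ⟨e1, e2, hne, he⟩ := Finset.card_eq_two.mp h
  have h1 : e1 ∈ N.edges.filter fun x => x.1 = v := by rw [he]; simp
  have h2 : e2 ∈ N.edges.filter fun x => x.1 = v := by rw [he]; simp
  simp only [Finset.mem_filter] at h1 h2
  have he1 : e1 = (v, e1.2) := by rw [← h1.2]
  have he2 : e2 = (v, e2.2) := by rw [← h2.2]
  refine ⟨e1.2, e2.2, ?_, he1 ▸ h1.1, he2 ▸ h2.1, fun c hc => ?_⟩
  · intro hab
    exact hne (by rw [he1, he2, hab])
  · have : (v, c) ∈ N.edges.filter fun x => x.1 = v :=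
      Finset.mem_filter.mpr ⟨hc, rfl⟩
    rw [he, Finset.mem_insert, Finset.mem_singleton] at this
    rcases this with h' | h'
    · exact Or.inl (congrArg Prod.snd h')
    · exact Or.inr (congrArg Prod.snd h')

lemma Net.indeg_pos_of_edge_s7 (N : Net α) {u v : ℕ} (h : N.Edge u v) :
    N.indeg v ≠ 0 := by
  intro h0
  have : (u, v) ∈ N.edges.filter fun x => x.2 = v :=
    Finset.mem_filter.mpr ⟨h, rfl⟩
  have := Finset.card_eq_zero.mp h0 ▸ this
  simp at this

end CherryAux

/-- Every binary tree-child network with at least two leaves contains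
a cherry or a reticulated cherry. -/
theorem treeChild_cherry_or_retCherry {X : Type} (N : Net X) (hN : N.TreeChild)
    (h2 : ∃ x y, N.IsLeaf x ∧ N.IsLeaf y ∧ x ≠ y) :
    ∃ x y, N.Cherry x y ∨ N.RetCherry x y := by
  classical
  obtain ⟨hnet, htc⟩ := hN
  obtain ⟨hends, hacyc, ⟨r, hr, hruniq⟩, hclass, hlabs, hluniq⟩ := hnet
  obtain ⟨x0, y0, hx0, hy0, hxy0⟩ := h2
  have hanti : ∀ a b, N.Reaches a b → N.Reaches b a → a = b :=
    fun a b h1 h2 => N.reaches_antisymm hacyc h1 h2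
  have htr : ∀ a b c : ℕ, N.Reaches a b → N.Reaches b c → N.Reaches a c :=
    fun a b c h1 h2 => h1.trans h2
  -- the root reaches every vertex
  have hreach : ∀ w ∈ N.verts, N.Reaches r w := by
    intro w hw
    have hAne : (N.verts.filter fun u => N.Reaches u w).Nonempty :=
      ⟨w, Finset.mem_filter.mpr ⟨hw, Relation.ReflTransGen.refl⟩⟩
    obtain ⟨u, huA, humax⟩ := Net.exists_min_rel (r := fun a b => N.Reaches b a)
      (fun a b c h1 h2 => h2.trans h1) (fun a b h1 h2 => hanti _ _ h2 h1)
      _ hAne (fun a => Relation.ReflTransGen.refl)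
    simp only [Finset.mem_filter] at huA
    have hu0 : N.indeg u = 0 := by
      by_contra h0
      have : (N.edges.filter fun e => e.2 = u).Nonempty := by
        rw [← Finset.card_pos]
        exact Nat.pos_of_ne_zero (fun h => h0 h)
      obtain ⟨e, he⟩ := this
      simp only [Finset.mem_filter] at he
      have hedge : N.Edge e.1 u := by
        show (e.1, u) ∈ N.edges
        have : e = (e.1, u) := by rw [← he.2]
        exact this ▸ he.1
      have hp1 : e.1 ∈ N.verts := (hends _ he.1).1
      have hpu : N.Reaches e.1 u := Relation.ReflTransGen.single hedge
      have : e.1 = u := humax e.1 (by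
        simp only [Finset.mem_filter]
        exact ⟨hp1, hpu.trans huA.2⟩) hpu
      exact hacyc _ _ hedge (this ▸ Relation.ReflTransGen.refl)
    have : u = r := by
      rcases hclass u huA.1 with h | h | h | h
      · exact hruniq u h
      · rw [h.2.1] at hu0; exact absurd hu0 one_ne_zero
      · rw [h.2.1] at hu0; exact absurd hu0 one_ne_zero
      · rw [h.2.1] at hu0; simp at hu0
    exact this ▸ huA.2
  -- a lowest root-or-tree node
  have hSne : (N.verts.filter fun v => N.IsRoot v ∨ N.IsTreeNode v).Nonempty :=
    ⟨r, by simp [hr.1, hr]⟩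
  obtain ⟨v, hvS, hvmin⟩ := Net.exists_min_rel (r := N.Reaches) htr hanti _ hSne
    (fun a => Relation.ReflTransGen.refl)
  simp only [Finset.mem_filter] at hvS
  obtain ⟨hvV, hvRT⟩ := hvS
  -- no tree node is strictly below v
  have hnotree : ∀ w, N.Reaches v w → N.IsTreeNode w → w = v := by
    intro w hvw hw
    exact hvmin w (by simp only [Finset.mem_filter]; exact ⟨hw.1, Or.inr hw⟩) hvw
  rcases hvRT with hvroot | hvtree
  · -- v is the root: contradiction with two leaves
    exfalso
    obtain ⟨c, hvc, hcuniq⟩ := N.edge_of_outdeg_one hvroot.2.2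
    have hvr : v = r := hruniq v hvroot
    have hvnotleaf : ¬ N.IsLeaf v := by
      intro h; exact one_ne_zero (hvroot.2.2.symm.trans h.2.2)
    obtain ⟨c', hvc', hc'⟩ := htc v hvV hvnotleaf
    have hcc : c' = c := hcuniq c' hvc'
    have hcleaf : N.IsLeaf c := by
      rcases hc' with h | h
      · exfalso
        have : c' = v := hnotree c' (Relation.ReflTransGen.single hvc') h
        exact hacyc _ _ hvc' (this ▸ Relation.ReflTransGen.refl)
      · exact hcc ▸ h
    -- every leaf reached from v equals c
    have key : ∀ z, N.IsLeaf z → z = c := by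
      intro z hz
      have hrz : N.Reaches v z := hvr ▸ hreach z hz.1
      rcases Relation.ReflTransGen.cases_head hrz with h | ⟨u, hvu, huz⟩
      · exfalso
        rw [← h] at hz
        exact one_ne_zero (hz.2.1.symm.trans hvroot.2.1)
      · have : u = c := hcuniq u hvu
        rw [this] at huz
        exact N.eq_of_reaches_outdeg_zero hcleaf.2.2 huz
    exact hxy0 ((key x0 hx0).trans (key y0 hy0).symm)
  · -- v is a tree node
    obtain ⟨a, b, hab, hva, hvb, hchildren⟩ := N.edges_of_outdeg_two hvtree.2.2
    -- any child of v that is a tree node gives a contradiction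
    have hchildnotree : ∀ c, N.Edge v c → ¬ N.IsTreeNode c := by
      intro c hvc hc
      have : c = v := hnotree c (Relation.ReflTransGen.single hvc) hc
      exact hacyc _ _ hvc (this ▸ Relation.ReflTransGen.refl)
    -- classify a child: leaf or retic
    have hchildclass : ∀ c, N.Edge v c → N.IsLeaf c ∨ N.IsRetic c := by
      intro c hvc
      have hcV : c ∈ N.verts := (hends _ hvc).2
      rcases hclass c hcV with h | h | h | h
      · exact absurd h.2.1 (N.indeg_pos_of_edge_s7 hvc)
      · exact Or.inl h
      · exact absurd h (hchildnotree c hvc)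
      · exact Or.inr h
    -- main step: given two distinct children, first a leaf, conclude
    have key : ∀ c d, N.Edge v c → N.Edge v d → c ≠ d → N.IsLeaf c →
        ∃ x y, N.Cherry x y ∨ N.RetCherry x y := by
      intro c d hvc hvd hcd hcleaf
      rcases hchildclass d hvd with hdleaf | hdret
      · exact ⟨c, d, Or.inl ⟨hcleaf, hdleaf, hcd, v, hvc, hvd⟩⟩
      · obtain ⟨y, hdy, hyuniq⟩ := N.edge_of_outdeg_one hdret.2.2
        have hdnotleaf : ¬ N.IsLeaf d := by
          intro h; exact one_ne_zero (hdret.2.2.symm.trans h.2.2)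
        obtain ⟨c'', hdc'', hc''⟩ := htc d (hends _ hvd).2 hdnotleaf
        have hcy : c'' = y := hyuniq c'' hdc''
        have hyleaf : N.IsLeaf y := by
          rcases hc' : hc'' with h | h
          · exfalso
            have hvy : N.Reaches v y :=
              (Relation.ReflTransGen.single hvd).trans
                (Relation.ReflTransGen.single hdy)
            have : y = v := hnotree y hvy (hcy ▸ h)
            exact hacyc _ _ hdy (this ▸ Relation.ReflTransGen.single hvd)
          · exact hcy ▸ h
        exact ⟨c, y, Or.inr ⟨hcleaf, hyleaf, v, d, hdret, hdy, hvc, hvd⟩⟩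
    -- tree-child at v gives a leaf child
    have hvnotleaf : ¬ N.IsLeaf v := by
      intro h; exact two_ne_zero (hvtree.2.2.symm.trans h.2.2)
    obtain ⟨c, hvc, hc⟩ := htc v hvV hvnotleaf
    have hcleaf : N.IsLeaf c := by
      rcases hc with h | h
      · exact absurd h (hchildnotree c hvc)
      · exact h
    rcases hchildren c hvc with h | h
    · exact key c b (h ▸ hvc) hvb (h ▸ hab) (h ▸ hcleaf)
    · exact key c a (h ▸ hvc) hva (h ▸ hab.symm) (h ▸ hcleaf)
end
end

section
/- In a binary tree-child phylogenetic network, deleting a single reticulation edge (and cleaning up) can decrease the shortest up-down distance between any pair of leaves by at most one. -/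
open scoped Classical
noncomputable section

/-!
In a tree-child network the tail `u` of a reticulation edge `(u, r)` is a tree node whose other
child `b` has no other parent, and the child `c` of `r` has no other parent. Deleting `(u, r)` and
cleaning up therefore just suppresses `u` and `r`, replacing `a → u → b` and `p → r → c` by
edges `(a, b)` and `(p, c)`. An up-down path of the subnetwork lifts to `N` by reinserting `u`
and `r`, at a cost of up to two edges. When both are reinserted, either one leg passes through
`u` and later `r` (shortcut it by `u → r`), or both legs pass through `u`, or both through `r`
(move the apex there), or one leg passes through `u` and the other through `r` (move the apex
to `u` and use `u → r`); each costs at most one edge.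
-/

inductive ReachesWithin {V : Type*} (E : V → V → Prop) : V → V → ℕ → Prop
  | refl (v : V) (k : ℕ) : ReachesWithin E v v k
  | head {v w x : V} {k : ℕ} : E v w → ReachesWithin E w x k → ReachesWithin E v x (k + 1)

namespace ReachesWithin

variable {V : Type*} {E : V → V → Prop} {v w x : V} {k k' : ℕ}

theorem mono (h : ReachesWithin E v x k) (hk : k ≤ k') : ReachesWithin E v x k' := by
  induction h generalizing k' with
  | refl v k => exact .refl v k'
  | head hvw _ ih =>
    obtain ⟨k', rfl⟩ := Nat.exists_eq_add_of_le' (Nat.one_le_of_lt hk)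
    exact .head hvw (ih (by omega))

theorem of_isChain : ∀ {l : List V} {v : V}, l.IsChain E → l.head? = some v →
    l.getLast? = some x → ReachesWithin E v x (l.length - 1)
  | [_], _, _, rfl, hx => by cases hx; exact .refl _ _
  | _ :: w :: l, _, hl, rfl, hx => by
    rw [List.isChain_cons_cons] at hl
    rw [List.getLast?_cons_cons] at hx
    exact .head hl.1 (of_isChain hl.2 rfl hx)

theorem exists_isChain (h : ReachesWithin E v x k) :
    ∃ l : List V, l ≠ [] ∧ l.IsChain E ∧ l.head? = some v ∧ l.getLast? = some x ∧
      l.length ≤ k + 1 := by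
  induction h with
  | refl v k => exact ⟨[v], by simp, .singleton v, rfl, rfl, by simp⟩
  | @head v w x k hvw _ ih =>
    obtain ⟨l, hne, hl, hw, hx, hlen⟩ := ih
    obtain ⟨w', l', rfl⟩ := List.exists_cons_of_ne_nil hne
    cases hw
    refine ⟨v :: w :: l', by simp, .cons_cons hvw hl, rfl, ?_, by simpa using hlen⟩
    rwa [List.getLast?_cons_cons]

end ReachesWithin

namespace Net

variable {X : Type} {N : Net X} {x y v : ℕ} {l : List ℕ}

theorem IsUpDownPath.exists_apex (h : N.IsUpDownPath x y l) :
    ∃ v k₁ k₂, ReachesWithin N.Edge v x k₁ ∧ ReachesWithin N.Edge v y k₂ ∧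
      k₁ + k₂ + 1 = l.length := by
  obtain ⟨P, Q, ⟨hP, hPc⟩, ⟨hQ, hQc⟩, hPQ, hx, hy, rfl⟩ := h
  obtain ⟨v, hv⟩ := Option.ne_none_iff_exists'.mp (List.head?_eq_none_iff.not.mpr hP)
  refine ⟨v, _, _, .of_isChain hPc hv hx, .of_isChain hQc (hPQ ▸ hv) hy, ?_⟩
  have := List.length_pos_iff.mpr hP
  have := List.length_pos_iff.mpr hQ
  simp only [List.length_append, List.length_reverse, List.length_tail]
  omega

theorem IsUpDownDist.le_add {n k₁ k₂ : ℕ} (hn : N.IsUpDownDist x y n)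
    (hx : ReachesWithin N.Edge v x k₁) (hy : ReachesWithin N.Edge v y k₂) : n ≤ k₁ + k₂ := by
  obtain ⟨P, hP, hPc, hPv, hPx, hPlen⟩ := hx.exists_isChain
  obtain ⟨Q, hQ, hQc, hQv, hQy, hQlen⟩ := hy.exists_isChain
  have := hn.2 _ ⟨P, Q, ⟨hP, hPc⟩, ⟨hQ, hQc⟩, hPv.trans hQv.symm, hPx, hQy, rfl⟩
  simp only [List.length_append, List.length_reverse, List.length_tail] at this
  omega

end Net

section Shortcut

variable {V : Type*} {E E' : V → V → Prop} {a u b p r c v x y : V} {k k₁ k₂ : ℕ}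

-- The clause `ReflTransGen E v u` lets the induction see that a lift from `c` never meets `u`.
def LiftsWithin (E : V → V → Prop) (u r v x : V) (k : ℕ) : Prop :=
  ReachesWithin E v x k ∨
    (Relation.ReflTransGen E v u ∧ ReachesWithin E v x (k + 1) ∧ ReachesWithin E u x k) ∨
    (ReachesWithin E v x (k + 1) ∧ ReachesWithin E r x k)

theorem ReachesWithin.liftsWithin
    (hE' : ∀ v w, E' v w → (v = a ∧ w = b) ∨ (v = p ∧ w = c) ∨ E v w)
    (hau : E a u) (hub : E u b) (hur : E u r) (hpr : E p r) (hrc : E r c)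
    (hcu : ¬ Relation.ReflTransGen E c u) (h : ReachesWithin E' v x k) :
    LiftsWithin E u r v x k := by
  induction h with
  | refl v k => exact .inl (.refl v k)
  | @head v w x k hvw _ ih =>
    rcases hE' v w hvw with ⟨rfl, rfl⟩ | ⟨rfl, rfl⟩ | hvw
    · rcases ih with hb | ⟨-, -, hu⟩ | ⟨-, hr⟩
      · exact .inr (.inl ⟨.single hau, .head hau (.head hub hb), .head hub hb⟩)
      · exact .inl (.head hau hu)
      · exact .inr (.inr ⟨.head hau (.head hur hr), hr.mono k.le_succ⟩)
    · rcases ih with hc | ⟨hcu', -, -⟩ | ⟨-, hr⟩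
      · exact .inr (.inr ⟨.head hpr (.head hrc hc), .head hrc hc⟩)
      · exact absurd hcu' hcu
      · exact .inl (.head hpr hr)
    · rcases ih with hw | ⟨hwu, hw, hu⟩ | ⟨hw, hr⟩
      · exact .inl (.head hvw hw)
      · exact .inr (.inl ⟨.head hvw hwu, .head hvw hw, hu.mono k.le_succ⟩)
      · exact .inr (.inr ⟨.head hvw hw, hr.mono k.le_succ⟩)

theorem LiftsWithin.exists_apex (hur : E u r) (hx : LiftsWithin E u r v x k₁)
    (hy : LiftsWithin E u r v y k₂) :
    ∃ w j₁ j₂, ReachesWithin E w x j₁ ∧ ReachesWithin E w y j₂ ∧ j₁ + j₂ ≤ k₁ + k₂ + 1 := by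
  rcases hx with hx | ⟨-, hx, hux⟩ | ⟨hx, hrx⟩ <;>
  rcases hy with hy | ⟨-, hy, huy⟩ | ⟨hy, hry⟩
  · exact ⟨v, _, _, hx, hy, by omega⟩
  · exact ⟨v, _, _, hx, hy, by omega⟩
  · exact ⟨v, _, _, hx, hy, by omega⟩
  · exact ⟨v, _, _, hx, hy, by omega⟩
  · exact ⟨u, _, _, hux, huy, by omega⟩
  · exact ⟨u, _, _, hux, .head hur hry, by omega⟩
  · exact ⟨v, _, _, hx, hy, by omega⟩
  · exact ⟨u, _, _, .head hur hrx, huy, by omega⟩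
  · exact ⟨r, _, _, hrx, hry, by omega⟩

end Shortcut

namespace Net

variable {X : Type} {N : Net X} {s t v w : ℕ}

theorem indeg_pos (h : N.Edge s v) : 0 < N.indeg v :=
  Finset.card_pos.mpr ⟨(s, v), Finset.mem_filter.mpr ⟨h, rfl⟩⟩

theorem outdeg_pos (h : N.Edge v t) : 0 < N.outdeg v :=
  Finset.card_pos.mpr ⟨(v, t), Finset.mem_filter.mpr ⟨h, rfl⟩⟩

theorem exists_edge_of_outdeg_pos (h : 0 < N.outdeg v) : ∃ w, N.Edge v w := by
  obtain ⟨e, he⟩ := Finset.card_pos.mp h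
  obtain ⟨he', rfl⟩ := Finset.mem_filter.mp he
  exact ⟨e.2, he'⟩

theorem one_lt_indeg (hs : N.Edge s v) (ht : N.Edge t v) (hst : s ≠ t) : 1 < N.indeg v :=
  Finset.one_lt_card.mpr ⟨(s, v), Finset.mem_filter.mpr ⟨hs, rfl⟩,
    (t, v), Finset.mem_filter.mpr ⟨ht, rfl⟩, by simpa using hst⟩

theorem one_lt_outdeg (hs : N.Edge v s) (ht : N.Edge v t) (hst : s ≠ t) : 1 < N.outdeg v :=
  Finset.one_lt_card.mpr ⟨(v, s), Finset.mem_filter.mpr ⟨hs, rfl⟩,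
    (v, t), Finset.mem_filter.mpr ⟨ht, rfl⟩, by simpa using hst⟩

theorem edge_iff_of_indeg_eq_one (h : N.indeg v = 1) : ∃ s, ∀ z, N.Edge z v ↔ z = s := by
  obtain ⟨e, he⟩ := Finset.card_eq_one.mp h
  have hev : e.2 = v := (Finset.mem_filter.mp ((Finset.ext_iff.mp he e).mpr (by simp))).2
  refine ⟨e.1, fun z => ?_⟩
  have := Finset.ext_iff.mp he (z, v)
  simp only [Finset.mem_filter, and_true, Finset.mem_singleton] at this
  rw [Edge, this, Prod.ext_iff, hev]
  simp

theorem edge_iff_of_outdeg_eq_one (h : N.outdeg v = 1) : ∃ t, ∀ z, N.Edge v z ↔ z = t := by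
  obtain ⟨e, he⟩ := Finset.card_eq_one.mp h
  have hev : e.1 = v := (Finset.mem_filter.mp ((Finset.ext_iff.mp he e).mpr (by simp))).2
  refine ⟨e.2, fun z => ?_⟩
  have := Finset.ext_iff.mp he (v, z)
  simp only [Finset.mem_filter, and_true, Finset.mem_singleton] at this
  rw [Edge, this, Prod.ext_iff, hev]
  simp

theorem edge_iff_of_indeg_eq_two (h : N.indeg v = 2) :
    ∃ s t, s ≠ t ∧ ∀ z, N.Edge z v ↔ z = s ∨ z = t := by
  obtain ⟨e, f, hef, he⟩ := Finset.card_eq_two.mp h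
  have hev : e.2 = v := (Finset.mem_filter.mp ((Finset.ext_iff.mp he e).mpr (by simp))).2
  have hfv : f.2 = v := (Finset.mem_filter.mp ((Finset.ext_iff.mp he f).mpr (by simp))).2
  refine ⟨e.1, f.1, fun h => hef (Prod.ext h (hev.trans hfv.symm)), fun z => ?_⟩
  have := Finset.ext_iff.mp he (z, v)
  simp only [Finset.mem_filter, and_true, Finset.mem_insert, Finset.mem_singleton] at this
  rw [Edge, this, Prod.ext_iff, Prod.ext_iff, hev, hfv]
  simp

theorem edge_iff_of_outdeg_eq_two (h : N.outdeg v = 2) :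
    ∃ s t, s ≠ t ∧ ∀ z, N.Edge v z ↔ z = s ∨ z = t := by
  obtain ⟨e, f, hef, he⟩ := Finset.card_eq_two.mp h
  have hev : e.1 = v := (Finset.mem_filter.mp ((Finset.ext_iff.mp he e).mpr (by simp))).2
  have hfv : f.1 = v := (Finset.mem_filter.mp ((Finset.ext_iff.mp he f).mpr (by simp))).2
  refine ⟨e.2, f.2, fun h => hef (Prod.ext (hev.trans hfv.symm) h), fun z => ?_⟩
  have := Finset.ext_iff.mp he (v, z)
  simp only [Finset.mem_filter, and_true, Finset.mem_insert, Finset.mem_singleton] at this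
  rw [Edge, this, Prod.ext_iff, Prod.ext_iff, hev, hfv]
  simp

theorem IsNetwork.ne_of_edge (hN : N.IsNetwork) (h : N.Edge v w) : v ≠ w := by
  rintro rfl
  exact hN.2.1 v v h .refl

theorem IsNetwork.ne_of_edge_edge (hN : N.IsNetwork) (h₁ : N.Edge s v) (h₂ : N.Edge v t) :
    s ≠ t := by
  rintro rfl
  exact hN.2.1 v s h₂ (.single h₁)

theorem IsNetwork.outdeg_pos (hN : N.IsNetwork) (hv : v ∈ N.verts) (hl : ¬ N.IsLeaf v) :
    0 < N.outdeg v := by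
  rcases hN.2.2.2.1 v hv with h | h | h | h
  · exact h.2.2 ▸ Nat.one_pos
  · exact absurd h hl
  · exact h.2.2 ▸ Nat.two_pos
  · exact h.2.2 ▸ Nat.one_pos

theorem IsNetwork.isTreeNode_of_one_lt_outdeg (hN : N.IsNetwork) (hv : v ∈ N.verts)
    (h : 1 < N.outdeg v) : N.IsTreeNode v := by
  rcases hN.2.2.2.1 v hv with h' | h' | h' | h'
  · exact absurd h'.2.2 h.ne'
  · exact absurd h'.2.2 (by omega)
  · exact h'
  · exact absurd h'.2.2 h.ne'

theorem TreeChild.exists_child_indeg_eq_one (hN : N.TreeChild) (hv : v ∈ N.verts)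
    (hl : ¬ N.IsLeaf v) : ∃ c, N.Edge v c ∧ N.indeg c = 1 := by
  obtain ⟨c, hvc, hc | hc⟩ := hN.2 v hv hl
  exacts [⟨c, hvc, hc.2.1⟩, ⟨c, hvc, hc.2.1⟩]

end Net

structure ReticEdgeNbhd {X : Type} (N : Net X) where
  (u r a b p c : ℕ)
  network : N.IsNetwork
  parent_u : ∀ z, N.Edge z u ↔ z = a
  child_u : ∀ z, N.Edge u z ↔ z = r ∨ z = b
  parent_r : ∀ z, N.Edge z r ↔ z = u ∨ z = p
  child_r : ∀ z, N.Edge r z ↔ z = c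
  parent_b : ∀ z, N.Edge z b ↔ z = u
  parent_c : ∀ z, N.Edge z c ↔ z = r
  p_ne_u : p ≠ u

theorem Net.TreeChild.exists_reticEdgeNbhd {X : Type} {N : Net X} {u r : ℕ} (hN : N.TreeChild)
    (he : N.IsReticEdge (u, r)) : ∃ C : ReticEdgeNbhd N, C.u = u ∧ C.r = r := by
  obtain ⟨hur, hrV, hr_in, hr_out⟩ := he
  change N.Edge u r at hur
  have hnet := hN.1
  obtain ⟨c, hc⟩ := Net.edge_iff_of_outdeg_eq_one hr_out
  obtain ⟨p, hpu, hpar_r⟩ : ∃ p, p ≠ u ∧ ∀ z, N.Edge z r ↔ z = u ∨ z = p := by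
    obtain ⟨s, t, hst, hpar⟩ := Net.edge_iff_of_indeg_eq_two hr_in
    rcases (hpar u).mp hur with rfl | rfl
    exacts [⟨t, hst.symm, hpar⟩, ⟨s, hst, fun z => (hpar z).trans or_comm⟩]
  have hparent_c : ∀ z, N.Edge z c ↔ z = r := by
    obtain ⟨c', hrc', hc'⟩ := hN.exists_child_indeg_eq_one hrV
      (fun hl => by simp [hl.2.1] at hr_in)
    obtain rfl := (hc c').mp hrc'
    obtain ⟨s, hs⟩ := Net.edge_iff_of_indeg_eq_one hc'
    exact fun z => (hs z).trans (by rw [(hs r).mp hrc'])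
  have huV : u ∈ N.verts := (hnet.1 _ hur).1
  obtain ⟨b, hbr, hb_in⟩ : ∃ b, b ≠ r ∧ N.Edge u b ∧ N.indeg b = 1 := by
    obtain ⟨b, hub, hb⟩ := hN.exists_child_indeg_eq_one huV
      (fun hl => by simpa [hl.2.2] using Net.outdeg_pos hur)
    exact ⟨b, fun hbr => by rw [hbr, hr_in] at hb; exact absurd hb (by norm_num), hub, hb⟩
  have hu_tree := hnet.isTreeNode_of_one_lt_outdeg huV (Net.one_lt_outdeg hur hb_in.1 hbr.symm)
  obtain ⟨a, ha⟩ := Net.edge_iff_of_indeg_eq_one hu_tree.2.1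
  have hchild_u : ∀ z, N.Edge u z ↔ z = r ∨ z = b := by
    obtain ⟨s, t, _, hch⟩ := Net.edge_iff_of_outdeg_eq_two hu_tree.2.2
    have := (hch r).mp hur
    have := (hch b).mp hb_in.1
    intro z
    rw [hch]
    constructor <;> rintro (rfl | rfl) <;> grind
  have hparent_b : ∀ z, N.Edge z b ↔ z = u := by
    obtain ⟨s, hs⟩ := Net.edge_iff_of_indeg_eq_one hb_in.2
    exact fun z => (hs z).trans (by rw [(hs u).mp hb_in.1])
  exact ⟨⟨u, r, a, b, p, c, hnet, ha, hchild_u, hpar_r, hc, hparent_b, hparent_c, hpu⟩, rfl, rfl⟩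

namespace ReticEdgeNbhd

variable {X : Type} {N : Net X} (C : ReticEdgeNbhd N)

theorem edge_ur : N.Edge C.u C.r := (C.child_u _).mpr (.inl rfl)
theorem edge_ub : N.Edge C.u C.b := (C.child_u _).mpr (.inr rfl)
theorem edge_au : N.Edge C.a C.u := (C.parent_u _).mpr rfl
theorem edge_pr : N.Edge C.p C.r := (C.parent_r _).mpr (.inr rfl)
theorem edge_rc : N.Edge C.r C.c := (C.child_r _).mpr rfl

theorem u_ne_r : C.u ≠ C.r := C.network.ne_of_edge C.edge_ur
theorem u_ne_b : C.u ≠ C.b := C.network.ne_of_edge C.edge_ub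
theorem a_ne_u : C.a ≠ C.u := C.network.ne_of_edge C.edge_au
theorem p_ne_r : C.p ≠ C.r := C.network.ne_of_edge C.edge_pr
theorem r_ne_c : C.r ≠ C.c := C.network.ne_of_edge C.edge_rc
theorem a_ne_r : C.a ≠ C.r := C.network.ne_of_edge_edge C.edge_au C.edge_ur
theorem u_ne_c : C.u ≠ C.c := C.network.ne_of_edge_edge C.edge_ur C.edge_rc
theorem b_ne_r : C.b ≠ C.r := fun h => C.p_ne_u ((C.parent_b _).mp (h ▸ C.edge_pr))
theorem b_ne_c : C.b ≠ C.c := fun h => C.u_ne_r ((C.parent_c _).mp (h ▸ C.edge_ub))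

theorem not_reaches_c_u : ¬ N.Reaches C.c C.u :=
  fun h => C.network.2.1 _ _ C.edge_ur ((Relation.ReflTransGen.single C.edge_rc).trans h)

/-- The network obtained from `N` by deleting `(u, r)` and then suppressing `u` if `su` and
`r` if `sr`. -/
def stage (su sr : Bool) : Net X where
  verts := N.verts.filter fun v => (su → v ≠ C.u) ∧ (sr → v ≠ C.r)
  edges := (N.edges.filter fun e => e ≠ (C.u, C.r) ∧ (su → e.1 ≠ C.u ∧ e.2 ≠ C.u) ∧
      (sr → e.1 ≠ C.r ∧ e.2 ≠ C.r)) ∪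
    (if su then {(C.a, C.b)} else ∅) ∪ (if sr then {(C.p, C.c)} else ∅)
  lab := N.lab

variable {C} {su sr : Bool} {v w z s t : ℕ}

theorem stage_edge_iff : (C.stage su sr).Edge v w ↔
    (su ∧ v = C.a ∧ w = C.b) ∨ (sr ∧ v = C.p ∧ w = C.c) ∨
      (N.Edge v w ∧ (v, w) ≠ (C.u, C.r) ∧ (su → v ≠ C.u ∧ w ≠ C.u) ∧
        (sr → v ≠ C.r ∧ w ≠ C.r)) := by
  cases su <;> cases sr <;> simp [stage, Net.Edge]

theorem stage_false_false : C.stage false false = N.deleteEdge (C.u, C.r) := by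
  simp only [stage, Net.deleteEdge, Net.mk.injEq]
  refine ⟨by simp, ?_, trivial⟩
  ext e
  simp [and_comm]

theorem suppress_u_eq :
    (⟨(C.stage false sr).verts.erase C.u, insert (C.a, C.b)
      ((C.stage false sr).edges.filter fun e => e.1 ≠ C.u ∧ e.2 ≠ C.u), N.lab⟩ : Net X) =
      C.stage true sr := by
  have := C.p_ne_u
  have := C.u_ne_c
  simp only [stage, Net.mk.injEq]
  refine ⟨?_, ?_, trivial⟩ <;> ext <;> cases sr <;> simp <;> grind

theorem suppress_r_eq :
    (⟨(C.stage su false).verts.erase C.r, insert (C.p, C.c)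
      ((C.stage su false).edges.filter fun e => e.1 ≠ C.r ∧ e.2 ≠ C.r), N.lab⟩ : Net X) =
      C.stage su true := by
  have := C.a_ne_r
  have := C.b_ne_r
  simp only [stage, Net.mk.injEq]
  refine ⟨?_, ?_, trivial⟩ <;> ext <;> cases su <;> simp <;> grind

theorem stage_edge_cases (h : (C.stage su sr).Edge v w) :
    (v = C.a ∧ w = C.b) ∨ (v = C.p ∧ w = C.c) ∨ N.Edge v w := by
  rw [stage_edge_iff] at h
  tauto

theorem stage_edge_of_ne (h : N.Edge v w) (hvu : v ≠ C.u) (hvr : v ≠ C.r) (hwu : w ≠ C.u)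
    (hwr : w ≠ C.r) : (C.stage su sr).Edge v w :=
  stage_edge_iff.mpr (.inr (.inr ⟨h, by simp [hvu], fun _ => ⟨hvu, hwu⟩, fun _ => ⟨hvr, hwr⟩⟩))

theorem eq_of_stage_edge_u (h : (C.stage su sr).Edge z C.u) : su = false ∧ z = C.a := by
  have := C.u_ne_b
  have := C.u_ne_c
  rw [stage_edge_iff, C.parent_u] at h
  grind

theorem eq_of_stage_u_edge (h : (C.stage su sr).Edge C.u w) : su = false ∧ w = C.b := by
  have := C.a_ne_u
  have := C.p_ne_u
  rw [stage_edge_iff, C.child_u] at h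
  grind

theorem eq_of_stage_edge_r (h : (C.stage su sr).Edge z C.r) : sr = false ∧ z = C.p := by
  have := C.b_ne_r
  have := C.r_ne_c
  rw [stage_edge_iff, C.parent_r] at h
  grind

theorem eq_of_stage_r_edge (h : (C.stage su sr).Edge C.r w) : sr = false ∧ w = C.c := by
  have := C.a_ne_r
  have := C.p_ne_r
  rw [stage_edge_iff, C.child_r] at h
  grind

theorem exists_parent_of_stage_edge (h : (C.stage su sr).Edge z v) : ∃ z', N.Edge z' v := by
  rcases stage_edge_cases h with ⟨-, rfl⟩ | ⟨-, rfl⟩ | h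
  exacts [⟨_, C.edge_ub⟩, ⟨_, C.edge_rc⟩, ⟨z, h⟩]

theorem exists_child_of_stage_edge (h : (C.stage su sr).Edge v w) : ∃ w', N.Edge v w' := by
  rcases stage_edge_cases h with ⟨rfl, -⟩ | ⟨rfl, -⟩ | h
  exacts [⟨_, C.edge_au⟩, ⟨_, C.edge_pr⟩, ⟨w, h⟩]

variable (C) in
/-- Where an edge `(v, s)` of `N` with `v ∉ {u, r}` ends up in `C.stage su sr`. -/
def redirect (su sr : Bool) (s : ℕ) : ℕ :=
  if su ∧ s = C.u then C.b else if sr ∧ s = C.r then C.c else s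

theorem stage_edge_redirect (hvu : v ≠ C.u) (hvr : v ≠ C.r) (h : N.Edge v s) :
    (C.stage su sr).Edge v (C.redirect su sr s) := by
  have hsu : s = C.u → v = C.a := fun hs => (C.parent_u v).mp (hs ▸ h)
  have hsr : s = C.r → v = C.p := fun hs => ((C.parent_r v).mp (hs ▸ h)).resolve_left hvu
  rw [redirect, stage_edge_iff]
  split_ifs <;> grind

theorem redirect_ne (hvu : v ≠ C.u) (hvr : v ≠ C.r) (hs : N.Edge v s) (ht : N.Edge v t)
    (hst : s ≠ t) : C.redirect su sr s ≠ C.redirect su sr t := by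
  have hb : ∀ q, N.Edge v q → q ≠ C.b := fun q hq h => hvu ((C.parent_b v).mp (h ▸ hq))
  have hc : ∀ q, N.Edge v q → q ≠ C.c := fun q hq h => hvr ((C.parent_c v).mp (h ▸ hq))
  have := C.b_ne_c
  have := hb s hs
  have := hb t ht
  have := hc s hs
  have := hc t ht
  rw [redirect, redirect]
  split_ifs <;> grind

theorem one_lt_stage_outdeg (hvu : v ≠ C.u) (hvr : v ≠ C.r) (hv : N.IsTreeNode v) :
    1 < (C.stage su sr).outdeg v := by
  obtain ⟨s, t, hst, hch⟩ := Net.edge_iff_of_outdeg_eq_two hv.2.2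
  have hs := (hch s).mpr (.inl rfl)
  have ht := (hch t).mpr (.inr rfl)
  exact Net.one_lt_outdeg (stage_edge_redirect hvu hvr hs) (stage_edge_redirect hvu hvr ht)
    (redirect_ne hvu hvr hs ht hst)

theorem one_lt_stage_indeg (hvr : v ≠ C.r) (hv : N.IsRetic v) :
    1 < (C.stage su sr).indeg v := by
  obtain ⟨s, t, hst, hpar⟩ := Net.edge_iff_of_indeg_eq_two hv.2.1
  have hs := (hpar s).mpr (.inl rfl)
  have ht := (hpar t).mpr (.inr rfl)
  have hmulti : ∀ q, ¬ ∀ z, N.Edge z v ↔ z = q :=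
    fun q hq => hst (((hq s).mp hs).trans ((hq t).mp ht).symm)
  have hvu : v ≠ C.u := fun h => hmulti C.a (h ▸ C.parent_u)
  have hnot : ∀ z, N.Edge z v → z ≠ C.u ∧ z ≠ C.r := by
    refine fun z hz => ⟨fun h => ?_, fun h => ?_⟩
    · rcases (C.child_u v).mp (h ▸ hz) with rfl | rfl
      exacts [hvr rfl, hmulti C.u C.parent_b]
    · exact hmulti C.r ((C.child_r v).mp (h ▸ hz) ▸ C.parent_c)
  exact Net.one_lt_indeg (stage_edge_of_ne hs (hnot s hs).1 (hnot s hs).2 hvu hvr)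
    (stage_edge_of_ne ht (hnot t ht).1 (hnot t ht).2 hvu hvr) hst

theorem stage_suppress_cases (h₁ : (C.stage su sr).indeg v = 1)
    (h₂ : (C.stage su sr).outdeg v = 1) (hz : (C.stage su sr).Edge z v)
    (hw : (C.stage su sr).Edge v w) :
    (v = C.u ∧ su = false ∧ z = C.a ∧ w = C.b) ∨ (v = C.r ∧ sr = false ∧ z = C.p ∧ w = C.c) := by
  by_cases hvu : v = C.u
  · subst hvu
    exact .inl ⟨rfl, (eq_of_stage_u_edge hw).1, (eq_of_stage_edge_u hz).2,
      (eq_of_stage_u_edge hw).2⟩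
  by_cases hvr : v = C.r
  · subst hvr
    exact .inr ⟨rfl, (eq_of_stage_r_edge hw).1, (eq_of_stage_edge_r hz).2,
      (eq_of_stage_r_edge hw).2⟩
  exfalso
  obtain ⟨z', hz'⟩ := exists_parent_of_stage_edge hz
  obtain ⟨w', hw'⟩ := exists_child_of_stage_edge hw
  rcases C.network.2.2.2.1 v (C.network.1 _ hw').1 with hv | hv | hv | hv
  · exact absurd hv.2.1 (Net.indeg_pos hz').ne'
  · exact absurd hv.2.2 (Net.outdeg_pos hw').ne'
  · exact absurd h₂ (one_lt_stage_outdeg hvu hvr hv).ne'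
  · exact absurd h₁ (one_lt_stage_indeg hvr hv).ne'

theorem stage_outdeg_pos (hv : v ∈ (C.stage su sr).verts) (hlab : N.lab v = none) :
    0 < (C.stage su sr).outdeg v := by
  simp only [stage, Finset.mem_filter] at hv
  obtain ⟨hvN, hsu, hsr⟩ := hv
  by_cases hvu : v = C.u
  · subst hvu
    refine Net.outdeg_pos (stage_edge_iff.mpr (.inr (.inr ⟨C.edge_ub, ?_, ?_, ?_⟩)))
    · simpa using C.b_ne_r
    · exact fun h => absurd rfl (hsu h)
    · exact fun _ => ⟨C.u_ne_r, C.b_ne_r⟩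
  by_cases hvr : v = C.r
  · subst hvr
    refine Net.outdeg_pos (stage_edge_iff.mpr (.inr (.inr ⟨C.edge_rc, ?_, ?_, ?_⟩)))
    · exact fun h => C.u_ne_r (Prod.ext_iff.mp h).1.symm
    · exact fun _ => ⟨C.u_ne_r.symm, C.u_ne_c.symm⟩
    · exact fun h => absurd rfl (hsr h)
  have hleaf : ¬ N.IsLeaf v := fun hl => by
    obtain ⟨_, hx⟩ := (C.network.2.2.2.2.1 v).mpr hl
    simp [hlab] at hx
  obtain ⟨s, hs⟩ := Net.exists_edge_of_outdeg_pos (C.network.outdeg_pos hvN hleaf)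
  exact Net.outdeg_pos (stage_edge_redirect hvu hvr hs)

theorem exists_stage_of_cleanStep {K : Net X} (h : Net.CleanStep (C.stage su sr) K) :
    ∃ su' sr', K = C.stage su' sr' := by
  cases h with
  | delNode v hv h0 hlab => exact absurd h0 (stage_outdeg_pos hv hlab).ne'
  | suppress z v w h₁ h₂ hz hw =>
    rcases stage_suppress_cases h₁ h₂ hz hw with ⟨rfl, rfl, rfl, rfl⟩ | ⟨rfl, rfl, rfl, rfl⟩
    exacts [⟨true, sr, suppress_u_eq⟩, ⟨su, true, suppress_r_eq⟩]

theorem exists_stage_of_reflTransGen {K : Net X}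
    (h : Relation.ReflTransGen Net.CleanStep (C.stage su sr) K) :
    ∃ su' sr', K = C.stage su' sr' := by
  induction h with
  | refl => exact ⟨su, sr, rfl⟩
  | tail _ hstep ih =>
    obtain ⟨su', sr', rfl⟩ := ih
    exact exists_stage_of_cleanStep hstep

end ReticEdgeNbhd

theorem maxSubnet_distance_drop_le_one_general {X : Type} (N M : Net X) (hN : N.TreeChild)
    (h : N.IsMaxSubnet M) (x y : ℕ) (n m : ℕ) (hn : N.IsUpDownDist x y n)
    (hm : M.IsUpDownDist x y m) :
    n ≤ m + 1 := by
  obtain ⟨⟨u, r⟩, hret, hclean, -⟩ := h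
  obtain ⟨C, rfl, rfl⟩ := hN.exists_reticEdgeNbhd hret
  rw [← C.stage_false_false] at hclean
  obtain ⟨su, sr, rfl⟩ := C.exists_stage_of_reflTransGen hclean
  obtain ⟨l, hl, hlen⟩ := hm.1
  obtain ⟨v, k₁, k₂, hx, hy, hk⟩ := hl.exists_apex
  have lift {z k} (h : ReachesWithin (C.stage su sr).Edge v z k) :
      LiftsWithin N.Edge C.u C.r v z k :=
    h.liftsWithin (fun _ _ => ReticEdgeNbhd.stage_edge_cases) C.edge_au C.edge_ub C.edge_ur
      C.edge_pr C.edge_rc C.not_reaches_c_u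
  obtain ⟨w, j₁, j₂, hwx, hwy, hj⟩ := (lift hx).exists_apex C.edge_ur (lift hy)
  have := hn.le_add hwx hwy
  omega

/-- In a binary tree-child network, deleting a single reticulation edge
(and cleaning up) decreases the shortest up-down distance between two leaves by at most 1. -/
theorem maxSubnet_distance_drop_le_one {X : Type} (N M : Net X) (hN : N.TreeChild)
    (h : N.IsMaxSubnet M) (x y : ℕ) (hx : N.IsLeaf x) (hy : N.IsLeaf y)
    (n m : ℕ) (hn : N.IsUpDownDist x y n) (hm : M.IsUpDownDist x y m) :
    n ≤ m + 1 :=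
  maxSubnet_distance_drop_le_one_general N M hN h x y n m hn hm
end
end

section
/- Let N be a binary tree-child network with leaves x and y such that d_N(x,y) = 4. Then there are at most two distinct shortest up-down paths between x and y in N. -/
open scoped Classical
noncomputable section

/-!
On a shortest up-down path `x, pₓ, m, p_y, y` of length four, `pₓ` and `p_y` are the unique
parents of the leaves `x` and `y`, so the path is determined by its middle node `m`, and `m` is a
neighbour of `pₓ` other than `x`. In a binary network every node has at most three neighbours,
which leaves at most two choices for `m`.
-/

namespace Net

variable {α : Type} {N : Net α}

theorem not_edge_of_outdeg_eq_zero {u v : ℕ} (h : N.outdeg u = 0) : ¬ N.Edge u v := fun huv =>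
  Finset.card_ne_zero_of_mem (s := N.edges.filter fun e => e.1 = u)
    (Finset.mem_filter.mpr ⟨huv, rfl⟩) (by exact h)

theorem eq_of_indeg_eq_one {u u' v : ℕ} (h : N.indeg v = 1) (hu : N.Edge u v)
    (hu' : N.Edge u' v) : u = u' := by
  obtain ⟨e, he⟩ := Finset.card_eq_one.mp h
  have mem : ∀ w, N.Edge w v → (w, v) = e := fun w hw =>
    Finset.mem_singleton.mp (he ▸ Finset.mem_filter.mpr ⟨hw, rfl⟩)
  exact congrArg Prod.fst ((mem u hu).trans (mem u' hu').symm)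

theorem card_le_indeg_add_outdeg {v : ℕ} {s : Finset ℕ} (hs : ∀ u ∈ s, N.Adj v u) :
    s.card ≤ N.indeg v + N.outdeg v := by
  have hsub : s ⊆ (N.edges.filter fun e => e.2 = v).image Prod.fst ∪
      (N.edges.filter fun e => e.1 = v).image Prod.snd := by
    intro u hu
    rcases hs u hu with h | h
    · exact Finset.mem_union_right _ <|
        Finset.mem_image.mpr ⟨(v, u), Finset.mem_filter.mpr ⟨h, rfl⟩, rfl⟩
    · exact Finset.mem_union_left _ <|
        Finset.mem_image.mpr ⟨(u, v), Finset.mem_filter.mpr ⟨h, rfl⟩, rfl⟩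
  calc s.card ≤ _ := Finset.card_le_card hsub
    _ ≤ _ := Finset.card_union_le _ _
    _ ≤ _ := add_le_add Finset.card_image_le Finset.card_image_le

theorem IsNetwork.indeg_add_outdeg_le_three (hN : N.IsNetwork) {v : ℕ} (hv : v ∈ N.verts) :
    N.indeg v + N.outdeg v ≤ 3 := by
  rcases hN.2.2.2.1 v hv with ⟨-, hi, ho⟩ | ⟨-, hi, ho⟩ | ⟨-, hi, ho⟩ | ⟨-, hi, ho⟩ <;>
    omega

theorem IsNetwork.eq_or_eq_or_eq_of_adj (hN : N.IsNetwork) {v x a b c : ℕ} (hx : N.Edge v x)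
    (ha : N.Adj v a) (hb : N.Adj v b) (hc : N.Adj v c) (hax : a ≠ x) (hbx : b ≠ x)
    (hcx : c ≠ x) : a = b ∨ a = c ∨ b = c := by
  by_contra! hne
  have hcard : ({x, a, b, c} : Finset ℕ).card = 4 := by
    rw [Finset.card_insert_of_notMem (by simp [hax.symm, hbx.symm, hcx.symm]),
      Finset.card_insert_of_notMem (by simp [hne.1, hne.2.1]), Finset.card_pair hne.2.2]
  have hadj : ∀ u ∈ ({x, a, b, c} : Finset ℕ), N.Adj v u := by
    simp only [Finset.mem_insert, Finset.mem_singleton]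
    rintro u (rfl | rfl | rfl | rfl) <;> first | exact Or.inl hx | assumption
  have := (card_le_indeg_add_outdeg hadj).trans (hN.indeg_add_outdeg_le_three (hN.1 _ hx).1)
  omega

theorem IsUpDownPath.exists_eq_of_length_eq_five {x y : ℕ} {l : List ℕ}
    (hx : ∀ v, ¬ N.Edge x v) (hy : ∀ v, ¬ N.Edge y v)
    (hl : N.IsUpDownPath x y l) (h5 : l.length = 5) :
    ∃ px m py, l = [x, px, m, py, y] ∧ N.Edge px x ∧ N.Edge py y ∧ N.Adj px m ∧ m ≠ x := by
  obtain ⟨p, q, ⟨hp, hpc : p.IsChain N.Edge⟩, ⟨hq, hqc : q.IsChain N.Edge⟩, hhead, hpx, hqy,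
    rfl⟩ := hl
  have hp₁ := List.length_pos_iff.mpr hp
  have hq₁ := List.length_pos_iff.mpr hq
  have hlen : p.length + q.length = 6 := by
    simp only [List.length_append, List.length_reverse, List.length_tail] at h5
    omega
  clear h5 hp hq
  rcases p with _ | ⟨a0, _ | ⟨a1, _ | ⟨a2, _ | ⟨a3, _ | ⟨a4, _ | ⟨_, _⟩⟩⟩⟩⟩⟩ <;>
    rcases q with _ | ⟨b0, _ | ⟨b1, _ | ⟨b2, _ | ⟨b3, _ | ⟨b4, _ | ⟨_, _⟩⟩⟩⟩⟩⟩ <;>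
    simp only [List.length_cons, List.length_nil] at hlen hp₁ hq₁ <;> try omega
  all_goals
    simp only [List.isChain_cons_cons, List.isChain_singleton, and_true] at hpc hqc
    simp only [List.head?_cons, List.getLast?_cons_cons, List.getLast?_singleton,
      Option.some.injEq] at hhead hpx hqy
    subst hhead hpx hqy
  -- one case per position of the apex; it can be neither `x` nor `y`, which have no out-edges
  · exact absurd hqc.1 (hx _)
  · exact ⟨a0, b1, b2, rfl, hpc, hqc.2.2, .inl hqc.1, fun h => hx _ (h ▸ hqc.2.1 :)⟩
  · exact ⟨a1, a0, b1, rfl, hpc.2, hqc.2, .inr hpc.1, fun h => hx _ (h ▸ hpc.1 :)⟩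
  · exact ⟨a2, a1, a0, rfl, hpc.2.2, hqc, .inr hpc.2.1, fun h => hx _ (h ▸ hpc.2.1 :)⟩
  · exact absurd hpc.1 (hy _)

end Net

theorem at_most_two_shortest_updown_paths_general {X : Type} (N : Net X) (hN : N.TreeChild)
    (x y : ℕ) (hx : N.IsLeaf x) (hy : N.IsLeaf y) :
    ∀ l₁ l₂ l₃ : List ℕ,
      (N.IsUpDownPath x y l₁ ∧ l₁.length = 5) →
      (N.IsUpDownPath x y l₂ ∧ l₂.length = 5) →
      (N.IsUpDownPath x y l₃ ∧ l₃.length = 5) →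
      l₁ = l₂ ∨ l₁ = l₃ ∨ l₂ = l₃ := by
  rintro l₁ l₂ l₃ ⟨h₁, hlen₁⟩ ⟨h₂, hlen₂⟩ ⟨h₃, hlen₃⟩
  have hx' : ∀ v, ¬ N.Edge x v := fun _ => Net.not_edge_of_outdeg_eq_zero hx.2.2
  have hy' : ∀ v, ¬ N.Edge y v := fun _ => Net.not_edge_of_outdeg_eq_zero hy.2.2
  obtain ⟨px, m₁, py, rfl, hpx, hpy, hm₁, hm₁x⟩ := h₁.exists_eq_of_length_eq_five hx' hy' hlen₁
  obtain ⟨px₂, m₂, py₂, rfl, hpx₂, hpy₂, hm₂, hm₂x⟩ :=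
    h₂.exists_eq_of_length_eq_five hx' hy' hlen₂
  obtain ⟨px₃, m₃, py₃, rfl, hpx₃, hpy₃, hm₃, hm₃x⟩ :=
    h₃.exists_eq_of_length_eq_five hx' hy' hlen₃
  obtain rfl := Net.eq_of_indeg_eq_one hx.2.1 hpx₂ hpx
  obtain rfl := Net.eq_of_indeg_eq_one hx.2.1 hpx₃ hpx
  obtain rfl := Net.eq_of_indeg_eq_one hy.2.1 hpy₂ hpy
  obtain rfl := Net.eq_of_indeg_eq_one hy.2.1 hpy₃ hpy
  rcases hN.1.eq_or_eq_or_eq_of_adj hpx hm₁ hm₂ hm₃ hm₁x hm₂x hm₃x with rfl | rfl | rfl <;>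
    simp

/-- In a binary tree-child network with leaves `x, y` at up-down distance 4,
there are at most two distinct shortest up-down paths between `x` and `y`. -/
theorem at_most_two_shortest_updown_paths {X : Type} (N : Net X) (hN : N.TreeChild)
    (x y : ℕ) (hx : N.IsLeaf x) (hy : N.IsLeaf y) (hd : N.IsUpDownDist x y 4) :
    ∀ l₁ l₂ l₃ : List ℕ,
      (N.IsUpDownPath x y l₁ ∧ l₁.length = 5) →
      (N.IsUpDownPath x y l₂ ∧ l₂.length = 5) →
      (N.IsUpDownPath x y l₃ ∧ l₃.length = 5) →
      l₁ = l₂ ∨ l₁ = l₃ ∨ l₂ = l₃ :=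
  at_most_two_shortest_updown_paths_general N hN x y hx hy
end
end
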